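/- arXiv:2005.00601 — 11 statements merged into one kernel-verified Lean document; each statement's English description precedes it below -/
import Mathlib

section
/- Let k ≥ 1 be an integer and let ω = exp(2πi/k) ∈ ℂ. If A is a complex n×n matrix with A^{k+1} = A, then there exists a polynomial F with nonnegative integer coefficients and degree at most k−1 such that tr(A) = F(ω) and rank(A) = F(1). -/
open Polynomial Matrix Finset

lemma trace_eq_rank_of_idem {n : ℕ} (P : Matrix (Fin n) (Fin n) ℂ) (h : P * P = P) :
    P.trace = (P.rank : ℂ) := by
  have hf : P.mulVecLin ∘ₗ P.mulVecLin = P.mulVecLin := by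
    rw [← Matrix.mulVecLin_mul, h]
  have hproj : LinearMap.IsProj (LinearMap.range P.mulVecLin) P.mulVecLin := by
    refine ⟨fun x => LinearMap.mem_range_self _ x, ?_⟩
    rintro x ⟨y, rfl⟩
    exact DFunLike.congr_fun hf y
  have htr := hproj.trace
  have h2 : LinearMap.trace ℂ (Fin n → ℂ) P.mulVecLin = P.trace := by
    rw [LinearMap.trace_eq_matrix_trace ℂ (Pi.basisFun ℂ (Fin n)),
      LinearMap.toMatrix_eq_toMatrix', ← Matrix.toLin'_apply' P,
      LinearMap.toMatrix'_toLin']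
  rw [← h2, htr, Matrix.rank]

theorem kpotent_trace_rank_poly (k n : ℕ) (hk : 1 ≤ k)
    (ω : ℂ) (hω : ω = Complex.exp (2 * Real.pi * Complex.I / k))
    (A : Matrix (Fin n) (Fin n) ℂ) (hA : A ^ (k + 1) = A) :
    ∃ F : Polynomial ℕ, F.natDegree ≤ k - 1 ∧
      A.trace = Polynomial.aeval ω F ∧ A.rank = F.eval 1 := by
  have hk0 : (k : ℂ) ≠ 0 := Nat.cast_ne_zero.mpr (by omega)
  have hprim : IsPrimitiveRoot ω k := hω ▸ Complex.isPrimitiveRoot_exp k (by omega)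
  have hωk : ω ^ k = 1 := hprim.pow_eq_one
  set E : ℕ → Matrix (Fin n) (Fin n) ℂ :=
    fun j => (k : ℂ)⁻¹ • ∑ i ∈ range k, ω ^ ((i + 1) * (k - j)) • A ^ (i + 1) with hE
  -- A * E j = ω^j • E j for j < k
  have hAE : ∀ j < k, A * E j = ω ^ j • E j := by
    intro j hj
    have expand : A * E j
        = (k : ℂ)⁻¹ • ∑ i ∈ range k, ω ^ ((i + 1) * (k - j)) • A ^ (i + 1 + 1) := by
      simp only [hE, Matrix.mul_smul, Finset.mul_sum]
      congr 1
      refine Finset.sum_congr rfl fun i _ => ?_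
      rw [← pow_succ' A (i + 1)]
    have rhs : ω ^ j • E j
        = (k : ℂ)⁻¹ • ∑ i ∈ range k, (ω ^ j * ω ^ ((i + 1) * (k - j))) • A ^ (i + 1) := by
      simp only [hE]
      rw [smul_comm, Finset.smul_sum]
      congr 1
      exact Finset.sum_congr rfl fun i _ => smul_smul _ _ _
    have shift : ∑ i ∈ range k, ω ^ ((i + 1) * (k - j)) • A ^ (i + 1 + 1)
        = ∑ i ∈ range k, (ω ^ j * ω ^ ((i + 1) * (k - j))) • A ^ (i + 1) := by
      obtain ⟨K, rfl⟩ : ∃ K, k = K + 1 := ⟨k - 1, by omega⟩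
      rw [Finset.sum_range_succ, Finset.sum_range_succ']
      congr 1
      · refine Finset.sum_congr rfl fun i hi => ?_
        congr 1
        obtain ⟨s, hs1, hs2⟩ : ∃ s, K + 1 - j = s ∧ j + s = K + 1 :=
          ⟨K + 1 - j, rfl, by omega⟩
        rw [hs1, ← pow_add, show j + (i + 1 + 1) * s = (i + 1) * s + (j + s) by ring,
          hs2, pow_add, hωk, mul_one]
      · have b1 : ω ^ ((K + 1) * (K + 1 - j)) = 1 := by rw [pow_mul, hωk, one_pow]
        have b2 : ω ^ j * ω ^ ((0 + 1) * (K + 1 - j)) = 1 := by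
          rw [← pow_add, show j + (0 + 1) * (K + 1 - j) = K + 1 by omega, hωk]
        rw [b1, b2, hA]
        simp
    rw [expand, rhs, shift]
  -- powers
  have hAEpow : ∀ j < k, ∀ m : ℕ, A ^ m * E j = (ω ^ j) ^ m • E j := by
    intro j hj m
    induction m with
    | zero => simp
    | succ m ih =>
      calc A ^ (m + 1) * E j = A ^ m * (A * E j) := by rw [pow_succ, mul_assoc]
        _ = ω ^ j • (A ^ m * E j) := by rw [hAE j hj, Matrix.mul_smul]
        _ = (ω ^ j) ^ (m + 1) • E j := by rw [ih, smul_smul, ← pow_succ']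
  -- idempotency
  have hEidem : ∀ j < k, E j * E j = E j := by
    intro j hj
    have term : ∀ i ∈ range k, (ω ^ ((i + 1) * (k - j)) • A ^ (i + 1)) * E j = E j := by
      intro i hi
      rw [Matrix.smul_mul, hAEpow j hj (i + 1), smul_smul, ← pow_mul, ← pow_add]
      obtain ⟨s, hs1, hs2⟩ : ∃ s, k - j = s ∧ j + s = k := ⟨k - j, rfl, by omega⟩
      rw [hs1, show (i + 1) * s + j * (i + 1) = (j + s) * (i + 1) by ring, hs2,
        pow_mul, hωk, one_pow, one_smul]
    nth_rewrite 1 [hE]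
    simp only
    rw [Matrix.smul_mul, Finset.sum_mul, Finset.sum_congr rfl term, Finset.sum_const,
      Finset.card_range, ← Nat.cast_smul_eq_nsmul ℂ, smul_smul, inv_mul_cancel₀ hk0,
      one_smul]
  -- sum of projections
  have hsum : ∑ j ∈ range k, E j = A ^ k := by
    simp only [hE]
    rw [← Finset.smul_sum, Finset.sum_comm]
    have step : ∀ i ∈ range k,
        ∑ j ∈ range k, ω ^ ((i + 1) * (k - j)) • A ^ (i + 1)
          = (∑ j ∈ range k, ω ^ ((i + 1) * (k - j))) • A ^ (i + 1) := by
      intro i _; rw [Finset.sum_smul]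
    rw [Finset.sum_congr rfl step]
    have inner : ∀ i ∈ range k, (∑ j ∈ range k, ω ^ ((i + 1) * (k - j)))
        = if i = k - 1 then (k : ℂ) else 0 := by
      intro i hi
      rw [mem_range] at hi
      have refl1 := Finset.sum_range_reflect (fun j => ω ^ ((i + 1) * (k - j))) k
      have eq1 : ∑ j ∈ range k, ω ^ ((i + 1) * (k - (k - 1 - j)))
          = ∑ j ∈ range k, (ω ^ (i + 1)) ^ (j + 1) := by
        refine Finset.sum_congr rfl fun j hj => ?_
        rw [mem_range] at hj
        rw [← pow_mul, show k - (k - 1 - j) = j + 1 by omega, mul_comm]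
      rw [← refl1]
      rw [eq1]
      by_cases hcase : i = k - 1
      · subst hcase
        have h1 : ω ^ (k - 1 + 1) = 1 := by rw [show k - 1 + 1 = k by omega, hωk]
        simp [h1]
      · have hne : ω ^ (i + 1) ≠ 1 :=
          hprim.pow_ne_one_of_pos_of_lt (by omega) (by omega)
        have hgs : ∑ j ∈ range k, (ω ^ (i + 1)) ^ (j + 1)
            = ω ^ (i + 1) * ∑ j ∈ range k, (ω ^ (i + 1)) ^ j := by
          rw [Finset.mul_sum]
          exact Finset.sum_congr rfl fun j _ => by rw [← pow_succ']
        rw [hgs, geom_sum_eq hne, ← pow_mul, mul_comm (i + 1) k, pow_mul, hωk, one_pow,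
          sub_self, zero_div, mul_zero]
        simp [hcase]
    rw [Finset.sum_congr rfl fun i hi => by rw [inner i hi]]
    rw [Finset.sum_eq_single_of_mem (k - 1) (by rw [mem_range]; omega)
      (fun i _ hne => by simp [hne])]
    rw [if_pos rfl, show k - 1 + 1 = k by omega, smul_smul, inv_mul_cancel₀ hk0, one_smul]
  -- A as combination
  have hAeq : A = ∑ j ∈ range k, ω ^ j • E j := by
    have h1 : A = A * A ^ k := by rw [← pow_succ' A k, hA]
    rw [h1, ← hsum, Finset.mul_sum]
    exact Finset.sum_congr rfl fun j hj => hAE j (mem_range.mp hj)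
  -- A^k idempotent
  have hAkidem : A ^ k * A ^ k = A ^ k := by
    rw [← pow_add, show k + k = (k - 1) + (k + 1) by omega, pow_add, hA,
      ← pow_succ, show k - 1 + 1 = k by omega]
  -- rank A = rank A^k
  have hrank : A.rank = (A ^ k).rank := by
    refine le_antisymm ?_ ?_
    · have h1 : A = A ^ k * A := by rw [← pow_succ, hA]
      calc A.rank = (A ^ k * A).rank := by rw [← h1]
        _ ≤ (A ^ k).rank := Matrix.rank_mul_le_left _ _
    · have h1 : A ^ k = A ^ (k - 1) * A := by
        rw [← pow_succ, show k - 1 + 1 = k by omega]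
      calc (A ^ k).rank = (A ^ (k - 1) * A).rank := by rw [← h1]
        _ ≤ A.rank := Matrix.rank_mul_le_right _ _
  have htrE : ∀ j < k, (E j).trace = ((E j).rank : ℂ) := fun j hj =>
    trace_eq_rank_of_idem _ (hEidem j hj)
  refine ⟨∑ j ∈ range k, C (E j).rank * X ^ j, ?_, ?_, ?_⟩
  · refine Polynomial.natDegree_sum_le_of_forall_le _ _ fun j hj => ?_
    refine (Polynomial.natDegree_C_mul_le _ _).trans ?_
    refine (Polynomial.natDegree_X_pow_le j).trans ?_
    rw [mem_range] at hj; omega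
  · rw [hAeq, Matrix.trace_sum, map_sum]
    refine Finset.sum_congr rfl fun j hj => ?_
    rw [Matrix.trace_smul, htrE j (mem_range.mp hj)]
    simp [smul_eq_mul, mul_comm, eq_natCast]
  · have h1 : ((A ^ k).rank : ℂ) = ∑ j ∈ range k, ((E j).rank : ℂ) := by
      rw [← trace_eq_rank_of_idem _ hAkidem, ← hsum, Matrix.trace_sum]
      exact Finset.sum_congr rfl fun j hj => htrE j (mem_range.mp hj)
    have h2 : (A ^ k).rank = ∑ j ∈ range k, (E j).rank := by
      rw [← Nat.cast_sum] at h1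
      exact_mod_cast h1
    rw [hrank, h2, Polynomial.eval_finset_sum]
    simp
end

section
/- Let F be a field, let k ≥ 2 be an integer, and let ω ∈ F satisfy ω^k = 1. If A is an n×n matrix over F with A^k = A, then the matrix B = (ω − 1)·A^{k−1} + I satisfies B^k = I, i.e. B has order k. -/
open Matrix

theorem order_k_from_kpotent {F : Type*} [Field F] (k n : ℕ) (hk : 2 ≤ k)
    (ω : F) (hω : ω ^ k = 1)
    (A : Matrix (Fin n) (Fin n) F) (hA : A ^ k = A) :
    ((ω - 1) • A ^ (k - 1) + 1) ^ k = 1 := by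
  set P := A ^ (k - 1) with hP
  have hidem : P * P = P := by
    have h1 : P * P = A ^ (k - 1 + (k - 1)) := by rw [hP, pow_add]
    have h2 : k - 1 + (k - 1) = k + (k - 2) := by omega
    have h3 : k - 2 + 1 = k - 1 := by omega
    rw [h1, h2, pow_add, hA, ← pow_succ', h3]
  have key : ∀ m : ℕ, ((ω - 1) • P + 1) ^ m = (ω ^ m - 1) • P + 1 := by
    intro m
    induction m with
    | zero => simp
    | succ m ih =>
      rw [pow_succ, ih]
      rw [add_mul, mul_add, mul_add, one_mul, mul_one, smul_mul_smul_comm, hidem,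
        pow_succ]
      rw [one_mul, ← add_smul, ← add_assoc, ← add_smul]
      congr 1
      ring
  rw [key k, hω, sub_self, zero_smul, zero_add]
end

section
/- Let A be a complex n×n matrix with n ≥ 2. Then A is a sum of finitely many matrices each of finite order if and only if there exist m ≥ 1, pairwise distinct even positive integers β_1, …, β_m, pairwise distinct complex numbers ω_1, …, ω_m with ω_i^{β_i} = 1 for each i, polynomials F_1, …, F_m with positive integer coefficients satisfying 1 ≤ deg(F_i) ≤ β_i − 1, and a positive integer a_0, such that tr(A) = a_0 + F_1(ω_1) + … + F_m(ω_m). -/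
/-!
Eigenvalues of a matrix of finite order are roots of unity, so the trace of a sum of such
matrices is a sum of roots of unity. Conversely, for `n ≥ 2` every root of unity is the trace of
a sum of two diagonal matrices of finite order, and every trace-zero matrix is a sum of matrices
of finite order: a strictly upper triangular `U` is `(U + D) - D` with
`D = diag(1, ζ, …, ζ ^ (n - 1))`, where `U + D` has characteristic polynomial `X ^ n - 1`; and
conjugating a trace-zero diagonal matrix by the Vandermonde matrix of `ζ` makes its diagonal zero.
Hence a matrix is a sum of matrices of finite order iff its trace is a sum of roots of unity.

Such a sum, with all roots of order dividing an even `β`, is `Q(ω)` for a primitive `β`-th root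
`ω` and `deg Q < β`; adding `2 (1 + ω + ⋯ + ω ^ (β - 1)) = 0` makes every coefficient positive,
and moving `1` out of the constant term gives the normal form with `m = 1` and `a₀ = 1`.
-/

open Polynomial Matrix

def finiteOrderSums (R : Type*) [Semiring R] : AddSubmonoid R :=
  AddSubmonoid.closure {x | IsOfFinOrder x}

section Semiring

variable {R : Type*} [Semiring R]

theorem IsOfFinOrder.mem_finiteOrderSums {x : R} (hx : IsOfFinOrder x) : x ∈ finiteOrderSums R :=
  AddSubmonoid.subset_closure hx

theorem mem_finiteOrderSums_iff {x : R} :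
    x ∈ finiteOrderSums R ↔
      ∃ (N : ℕ) (B : Fin N → R), (∀ i, IsOfFinOrder (B i)) ∧ x = ∑ i, B i := by
  constructor
  · intro hx
    obtain ⟨l, hl, rfl⟩ := AddSubmonoid.exists_list_of_mem_closure hx
    exact ⟨l.length, l.get, fun i => hl _ (l.get_mem i), by rw [← List.sum_ofFn, List.ofFn_get]⟩
  · rintro ⟨N, B, hB, rfl⟩
    exact sum_mem fun i _ => (hB i).mem_finiteOrderSums

theorem natCast_mem_finiteOrderSums (a : ℕ) : (a : R) ∈ finiteOrderSums R := by
  simpa using nsmul_mem IsOfFinOrder.one.mem_finiteOrderSums a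

theorem map_mem_finiteOrderSums {R' : Type*} [Semiring R'] (f : R →+ R')
    (hf : ∀ x, IsOfFinOrder x → f x ∈ finiteOrderSums R') {x : R} (hx : x ∈ finiteOrderSums R) :
    f x ∈ finiteOrderSums R' :=
  AddSubmonoid.closure_le (S := (finiteOrderSums R').comap f) |>.2 hf hx

theorem conj_mem_finiteOrderSums (u : Rˣ) {x : R} (hx : x ∈ finiteOrderSums R) :
    ↑u * x * ↑u⁻¹ ∈ finiteOrderSums R :=
  map_mem_finiteOrderSums ((AddMonoidHom.mulRight (↑u⁻¹ : R)).comp (AddMonoidHom.mulLeft ↑u))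
    (fun y hy => (IsConj.isOfFinOrder ⟨u, u.mk_semiconjBy y⟩ hy).mem_finiteOrderSums) hx

theorem closure_pow_eq_one_mono {a b : ℕ} (h : a ∣ b) :
    AddSubmonoid.closure {z : R | z ^ a = 1} ≤ AddSubmonoid.closure {z : R | z ^ b = 1} := by
  obtain ⟨c, rfl⟩ := h
  exact AddSubmonoid.closure_mono fun z (hz : z ^ a = 1) => by simp [pow_mul, hz]

theorem exists_mem_closure_pow_eq_one {x : R} (hx : x ∈ finiteOrderSums R) :
    ∃ k, 0 < k ∧ x ∈ AddSubmonoid.closure {z : R | z ^ k = 1} := by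
  induction hx using AddSubmonoid.closure_induction with
  | mem z hz =>
    exact ⟨orderOf z, hz.orderOf_pos, AddSubmonoid.subset_closure (pow_orderOf_eq_one z)⟩
  | zero => exact ⟨1, one_pos, zero_mem _⟩
  | add x y _ _ hx hy =>
    obtain ⟨k, hk, hx⟩ := hx
    obtain ⟨l, hl, hy⟩ := hy
    exact ⟨k * l, Nat.mul_pos hk hl, add_mem (closure_pow_eq_one_mono (dvd_mul_right k l) hx)
      (closure_pow_eq_one_mono (dvd_mul_left l k) hy)⟩

end Semiring

theorem IsOfFinOrder.neg {R : Type*} [Ring R] {x : R} (hx : IsOfFinOrder x) :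
    IsOfFinOrder (-x) := by
  obtain ⟨k, hk, hxk⟩ := isOfFinOrder_iff_pow_eq_one.1 hx
  exact isOfFinOrder_iff_pow_eq_one.2
    ⟨2 * k, by omega, by rw [(even_two_mul k).neg_pow, pow_mul', hxk, one_pow]⟩

theorem aeval_mem_finiteOrderSums {R : Type*} [CommSemiring R] {ω : R} (hω : IsOfFinOrder ω)
    (P : ℕ[X]) : aeval ω P ∈ finiteOrderSums R := by
  rw [aeval_eq_sum_range]
  exact sum_mem fun j _ => nsmul_mem hω.pow.mem_finiteOrderSums _

section RootsOfUnity

variable {R : Type*} [CommRing R] [IsDomain R] {ω : R} {β : ℕ}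

theorem exists_natDegree_lt_aeval_eq (hω : IsPrimitiveRoot ω β) (hβ : 0 < β) {x : R}
    (hx : x ∈ AddSubmonoid.closure {z : R | z ^ β = 1}) :
    ∃ Q : ℕ[X], Q.natDegree < β ∧ aeval ω Q = x := by
  have : NeZero β := ⟨hβ.ne'⟩
  induction hx using AddSubmonoid.closure_induction with
  | mem z hz =>
    obtain ⟨j, hj, rfl⟩ := hω.eq_pow_of_pow_eq_one hz
    exact ⟨X ^ j, by rwa [natDegree_X_pow], by simp⟩
  | zero => exact ⟨0, by simpa using hβ, map_zero _⟩
  | add x y _ _ hx hy =>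
    obtain ⟨Q, hQ, rfl⟩ := hx
    obtain ⟨Q', hQ', rfl⟩ := hy
    exact ⟨Q + Q', (natDegree_add_le _ _).trans_lt (max_lt hQ hQ'), map_add _ _ _⟩

theorem exists_aeval_eq_one_add_aeval (hω : IsPrimitiveRoot ω β) (hβ : 2 ≤ β) {Q : ℕ[X]}
    (hQ : Q.natDegree < β) :
    ∃ P : ℕ[X], P.natDegree = β - 1 ∧ (∀ j ≤ β - 1, 0 < P.coeff j) ∧
      aeval ω Q = 1 + aeval ω P := by
  set D : ℕ[X] := ∑ j ∈ Finset.range β, monomial j (if j = 0 then 1 else 2)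
  have hD : ∀ j, D.coeff j = if j < β then (if j = 0 then 1 else 2) else 0 := by
    intro j
    simp [D, coeff_monomial]
  -- `D(ω) = 2 (1 + ω + ⋯ + ω ^ (β - 1)) - 1 = -1`
  have hDω : aeval ω D = -1 := by
    obtain ⟨b, rfl⟩ : ∃ b, β = b + 1 := ⟨β - 1, by omega⟩
    have hgeom := hω.geom_sum_eq_zero (by omega)
    rw [Finset.sum_range_succ'] at hgeom
    simp [D, Finset.sum_range_succ', ← Finset.mul_sum]
    linear_combination 2 * hgeom
  have hcoeff : ∀ j ≤ β - 1, 0 < (Q + D).coeff j := fun j hj => by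
    rw [coeff_add, hD, if_pos (by omega)]
    split_ifs <;> omega
  refine ⟨Q + D, natDegree_eq_of_le_of_coeff_ne_zero ?_ (hcoeff _ le_rfl).ne', hcoeff, ?_⟩
  · refine natDegree_le_iff_coeff_eq_zero.2 fun j hj => ?_
    rw [coeff_add, hD, if_neg (by omega), coeff_eq_zero_of_natDegree_lt (by omega), add_zero]
  · rw [map_add, hDω]
    ring

end RootsOfUnity

section Matrix

variable {n : ℕ}

theorem isOfFinOrder_diagonal {ι R : Type*} [Fintype ι] [DecidableEq ι] [Semiring R]
    {d : ι → R} (hd : ∀ i, IsOfFinOrder (d i)) : IsOfFinOrder (diagonal d) :=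
  (diagonalRingHom ι R).toMonoidHom.isOfFinOrder (IsOfFinOrder.pi hd)

theorem IsOfFinOrder.transpose {ι R : Type*} [Fintype ι] [DecidableEq ι] [CommSemiring R]
    {M : Matrix ι ι R} (hM : IsOfFinOrder M) : IsOfFinOrder Mᵀ := by
  obtain ⟨k, hk, hMk⟩ := isOfFinOrder_iff_pow_eq_one.1 hM
  exact isOfFinOrder_iff_pow_eq_one.2 ⟨k, hk, by rw [← transpose_pow, hMk, transpose_one]⟩

theorem transpose_mem_finiteOrderSums {ι R : Type*} [Fintype ι] [DecidableEq ι] [CommSemiring R]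
    {M : Matrix ι ι R} (hM : M ∈ finiteOrderSums (Matrix ι ι R)) :
    Mᵀ ∈ finiteOrderSums (Matrix ι ι R) :=
  map_mem_finiteOrderSums (transposeAddEquiv ι ι R).toAddMonoidHom
    (fun _ hB => hB.transpose.mem_finiteOrderSums) hM

theorem IsOfFinOrder.of_mem_spectrum {K A : Type*} [Field K] [Ring A] [Algebra K A] {a : A}
    (ha : IsOfFinOrder a) {k : K} (hk : k ∈ spectrum K a) : IsOfFinOrder k := by
  cases subsingleton_or_nontrivial A
  · simp [spectrum.of_subsingleton] at hk
  obtain ⟨m, hm, ham⟩ := isOfFinOrder_iff_pow_eq_one.1 ha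
  have := spectrum.pow_mem_pow a m hk
  rw [ham, spectrum.one_eq, Set.mem_singleton_iff] at this
  exact isOfFinOrder_iff_pow_eq_one.2 ⟨m, hm, this⟩

theorem IsOfFinOrder.trace_mem_finiteOrderSums {ι K : Type*} [Fintype ι] [DecidableEq ι] [Field K]
    [IsAlgClosed K] {B : Matrix ι ι K} (hB : IsOfFinOrder B) : B.trace ∈ finiteOrderSums K := by
  rw [trace_eq_sum_roots_charpoly]
  refine AddSubmonoid.multiset_sum_mem _ _ fun x hx => (hB.of_mem_spectrum ?_).mem_finiteOrderSums
  exact mem_spectrum_iff_isRoot_charpoly.2 (isRoot_of_mem_roots hx)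

theorem isOfFinOrder_of_isUpperTriangular {R : Type*} [CommRing R] [IsDomain R] {ζ : R}
    (hζ : IsPrimitiveRoot ζ n) {M : Matrix (Fin n) (Fin n) R} (hM : M.IsUpperTriangular)
    (hd : ∀ i, M i i = ζ ^ (i : ℕ)) : IsOfFinOrder M := by
  obtain rfl | hn := n.eq_zero_or_pos
  · exact isOfFinOrder_iff_pow_eq_one.2 ⟨1, one_pos, Subsingleton.elim _ _⟩
  -- Cayley–Hamilton, as the characteristic polynomial is `∏ (X - ζ ^ i) = X ^ n - 1`
  have hchar : M.charpoly = X ^ n - C 1 := by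
    rw [charpoly_of_isUpperTriangular M hM, X_pow_sub_C_eq_prod hζ hn (one_pow n),
      ← Fin.prod_univ_eq_prod_range]
    simp [hd]
  refine isOfFinOrder_iff_pow_eq_one.2 ⟨n, hn, ?_⟩
  simpa [hchar, sub_eq_zero] using M.aeval_self_charpoly

variable {K : Type*} [Field K] {ζ : K}

theorem mem_finiteOrderSums_of_isUpperTriangular (hζ : IsPrimitiveRoot ζ n)
    {U : Matrix (Fin n) (Fin n) K} (hU : U.IsUpperTriangular) (hd : ∀ i, U i i = 0) :
    U ∈ finiteOrderSums _ := by
  set D := diagonal fun i : Fin n => ζ ^ (i : ℕ)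
  have hD : IsOfFinOrder D :=
    isOfFinOrder_of_isUpperTriangular hζ (blockTriangular_diagonal _) (by simp [D])
  have hUD : IsOfFinOrder (U + D) :=
    isOfFinOrder_of_isUpperTriangular hζ (hU.add (blockTriangular_diagonal _)) (by simp [D, hd])
  simpa using add_mem hUD.mem_finiteOrderSums hD.neg.mem_finiteOrderSums

theorem mem_finiteOrderSums_of_diag_eq_zero (hζ : IsPrimitiveRoot ζ n)
    {M : Matrix (Fin n) (Fin n) K} (hd : ∀ i, M i i = 0) : M ∈ finiteOrderSums _ := by
  set U := Matrix.of fun i j => if i ≤ j then M i j else 0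
  set L := Matrix.of fun i j => if i < j then M j i else 0
  have hUL : M = U + Lᵀ := by
    ext i j
    rcases le_or_gt i j with h | h <;> simp [U, L, h, not_lt_of_ge, not_le_of_gt]
  rw [hUL]
  refine add_mem (mem_finiteOrderSums_of_isUpperTriangular hζ (fun i j h => ?_) (by simp [U, hd]))
    (transpose_mem_finiteOrderSums
      (mem_finiteOrderSums_of_isUpperTriangular hζ (fun i j h => ?_) (by simp [L])))
  · simp [U, not_le.2 (show j < i from h)]
  · simp [L, not_lt.2 (show j < i from h).le]

theorem vandermonde_mul_vandermonde_inv (hζ : IsPrimitiveRoot ζ n) :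
    vandermonde (fun i : Fin n => ζ ^ (i : ℕ)) * vandermonde (fun i : Fin n => ζ⁻¹ ^ (i : ℕ)) =
      (n : K) • 1 := by
  ext i k
  have hζ0 : ζ ≠ 0 := hζ.ne_zero (Fin.pos i).ne'
  have hterm : ∀ j : Fin n, (ζ ^ (i : ℕ)) ^ (j : ℕ) * (ζ⁻¹ ^ (j : ℕ)) ^ (k : ℕ) =
      (ζ ^ (i : ℕ) / ζ ^ (k : ℕ)) ^ (j : ℕ) :=
    fun j => by rw [div_eq_mul_inv, mul_pow, ← inv_pow, pow_right_comm ζ⁻¹]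
  simp only [mul_apply, vandermonde_apply, hterm, Matrix.smul_apply, one_apply, smul_eq_mul]
  rw [Fin.sum_univ_eq_sum_range (fun j => (ζ ^ (i : ℕ) / ζ ^ (k : ℕ)) ^ j)]
  by_cases hik : i = k
  · simp [hik, hζ0]
  · have hne : ζ ^ (i : ℕ) / ζ ^ (k : ℕ) ≠ 1 := fun h =>
      hik (Fin.ext (hζ.pow_inj i.isLt k.isLt (div_eq_one_iff_eq (pow_ne_zero _ hζ0) |>.1 h)))
    rw [geom_sum_eq hne, div_pow, pow_right_comm, hζ.pow_eq_one, pow_right_comm, hζ.pow_eq_one]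
    simp [hik]

theorem diagonal_mem_finiteOrderSums (hζ : IsPrimitiveRoot ζ n) {d : Fin n → K}
    (hd : ∑ i, d i = 0) : diagonal d ∈ finiteOrderSums _ := by
  obtain rfl | hn := n.eq_zero_or_pos
  · simp [Subsingleton.elim (diagonal d) 0]
  have : NeZero n := ⟨hn.ne'⟩
  have hn' : (n : K) ≠ 0 := hζ.neZero'.out
  set V := vandermonde fun i : Fin n => ζ ^ (i : ℕ)
  set W := (n : K)⁻¹ • vandermonde fun i : Fin n => ζ⁻¹ ^ (i : ℕ)
  have hVW : V * W = 1 := by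
    rw [Matrix.mul_smul, vandermonde_mul_vandermonde_inv hζ, smul_smul, inv_mul_cancel₀ hn',
      one_smul]
  let u : (Matrix (Fin n) (Fin n) K)ˣ := ⟨V, W, hVW, mul_eq_one_comm.1 hVW⟩
  have hdiag : ∀ i, (W * diagonal d * V) i i = 0 := by
    intro i
    have hterm : ∀ j, (W * diagonal d) i j * V j i = (n : K)⁻¹ * d j := fun j => by
      have : (ζ ^ (i : ℕ)) ^ (j : ℕ) ≠ 0 := pow_ne_zero _ (pow_ne_zero _ (hζ.ne_zero hn.ne'))
      simp only [W, V, mul_diagonal, Matrix.smul_apply, vandermonde_apply, inv_pow, smul_eq_mul,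
        pow_right_comm ζ (j : ℕ)]
      field_simp
    rw [mul_apply, Finset.sum_congr rfl fun j _ => hterm j, ← Finset.mul_sum, hd, mul_zero]
  have hconj : V * (W * diagonal d * V) * W = diagonal d := by
    simp only [mul_assoc, hVW, mul_one]
    rw [← mul_assoc, hVW, one_mul]
  simpa [u, hconj] using
    conj_mem_finiteOrderSums u (mem_finiteOrderSums_of_diag_eq_zero hζ hdiag)

theorem mem_finiteOrderSums_of_trace_eq_zero (hζ : IsPrimitiveRoot ζ n)
    {A : Matrix (Fin n) (Fin n) K} (hA : A.trace = 0) : A ∈ finiteOrderSums _ := by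
  rw [← sub_add_cancel A (diagonal fun i => A i i)]
  exact add_mem (mem_finiteOrderSums_of_diag_eq_zero hζ (by simp))
    (diagonal_mem_finiteOrderSums hζ hA)

end Matrix

theorem exists_trace_eq_of_isOfFinOrder (m : ℕ) {z : ℂ} (hz : IsOfFinOrder z) :
    ∃ M ∈ finiteOrderSums (Matrix (Fin (m + 2)) (Fin (m + 2)) ℂ), M.trace = z := by
  have hω := Complex.isPrimitiveRoot_exp 3 (by norm_num)
  set ω := Complex.exp (2 * Real.pi * Complex.I / (3 : ℕ))
  have h3 : 1 + ω + ω ^ 2 = 0 := by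
    simpa [Finset.sum_range_succ, add_assoc] using hω.geom_sum_eq_zero (by norm_num)
  have hω' : IsOfFinOrder ω := hω.isOfFinOrder (by norm_num)
  -- `diag(z, 1, …, 1) + diag(ω, ω², -1, …, -1)` has trace `z + (1 + ω + ω²) = z`
  let d₁ : Fin (m + 2) → ℂ := Fin.cons z 1
  let d₂ : Fin (m + 2) → ℂ := Fin.cons ω (Fin.cons (ω ^ 2) (-1))
  have hd₁ : ∀ i, IsOfFinOrder (d₁ i) := Fin.cases hz fun _ => IsOfFinOrder.one
  have hd₂ : ∀ i, IsOfFinOrder (d₂ i) :=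
    Fin.cases hω' (Fin.cases hω'.pow fun _ => IsOfFinOrder.one.neg)
  refine ⟨diagonal d₁ + diagonal d₂, add_mem (isOfFinOrder_diagonal hd₁).mem_finiteOrderSums
    (isOfFinOrder_diagonal hd₂).mem_finiteOrderSums, ?_⟩
  simp [d₁, d₂, Fin.sum_univ_succ]
  linear_combination h3

theorem mem_finiteOrderSums_iff_trace_mem {n : ℕ} (hn : 2 ≤ n) {A : Matrix (Fin n) (Fin n) ℂ} :
    A ∈ finiteOrderSums (Matrix (Fin n) (Fin n) ℂ) ↔ A.trace ∈ finiteOrderSums ℂ := by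
  refine ⟨map_mem_finiteOrderSums (traceAddMonoidHom _ ℂ)
    fun B hB => hB.trace_mem_finiteOrderSums, fun hA => ?_⟩
  obtain ⟨m, rfl⟩ := Nat.exists_eq_add_of_le' hn
  have htrace : finiteOrderSums ℂ ≤ (finiteOrderSums _).map (traceAddMonoidHom (Fin (m + 2)) ℂ) :=
    AddSubmonoid.closure_le.2 fun z hz => by simpa using exists_trace_eq_of_isOfFinOrder m hz
  obtain ⟨M, hM, hMA⟩ := htrace hA
  have hζ := Complex.isPrimitiveRoot_exp (m + 2) (by omega)
  rw [← add_sub_cancel M A]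
  exact add_mem hM (mem_finiteOrderSums_of_trace_eq_zero hζ (by simp_all [trace_sub]))

theorem exists_eq_one_add_aeval {t : ℂ} (ht : t ∈ finiteOrderSums ℂ) :
    ∃ (β : ℕ) (ω : ℂ) (P : ℕ[X]), 0 < β ∧ Even β ∧ ω ^ β = 1 ∧ 1 ≤ P.natDegree ∧
      P.natDegree ≤ β - 1 ∧ (∀ j ≤ P.natDegree, 0 < P.coeff j) ∧ t = 1 + aeval ω P := by
  obtain ⟨k, hk, ht⟩ := exists_mem_closure_pow_eq_one ht
  have hω := Complex.isPrimitiveRoot_exp (2 * k) (by omega)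
  obtain ⟨Q, hQ, rfl⟩ :=
    exists_natDegree_lt_aeval_eq hω (by omega) (closure_pow_eq_one_mono (dvd_mul_left k 2) ht)
  obtain ⟨P, hdeg, hcoeff, hQP⟩ := exists_aeval_eq_one_add_aeval hω (by omega) hQ
  exact ⟨2 * k, _, P, by omega, even_two_mul k, hω.pow_eq_one, by omega, hdeg.le,
    fun j hj => hcoeff j (hdeg ▸ hj), hQP⟩

theorem sum_of_finite_order_iff (n : ℕ) (hn : 2 ≤ n)
    (A : Matrix (Fin n) (Fin n) ℂ) :
    (∃ (N : ℕ) (B : Fin N → Matrix (Fin n) (Fin n) ℂ),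
        (∀ i, ∃ k : ℕ, 0 < k ∧ B i ^ k = 1) ∧ A = ∑ i, B i) ↔
    (∃ (m : ℕ) (β : Fin m → ℕ) (ω : Fin m → ℂ) (P : Fin m → Polynomial ℕ) (a₀ : ℕ),
        1 ≤ m ∧
        Function.Injective β ∧ (∀ i, 0 < β i ∧ Even (β i)) ∧
        Function.Injective ω ∧ (∀ i, ω i ^ β i = 1) ∧
        (∀ i, 1 ≤ (P i).natDegree ∧ (P i).natDegree ≤ β i - 1 ∧
          ∀ j ≤ (P i).natDegree, 0 < (P i).coeff j) ∧
        0 < a₀ ∧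
        A.trace = a₀ + ∑ i, Polynomial.aeval (ω i) (P i)) := by
  simp only [← isOfFinOrder_iff_pow_eq_one, ← mem_finiteOrderSums_iff,
    mem_finiteOrderSums_iff_trace_mem hn]
  constructor
  · intro h
    obtain ⟨β, ω, P, hβ, hβ2, hω, hdeg₁, hdeg, hcoeff, htr⟩ := exists_eq_one_add_aeval h
    exact ⟨1, fun _ => β, fun _ => ω, fun _ => P, 1, le_rfl, Function.injective_of_subsingleton _,
      fun _ => ⟨hβ, hβ2⟩, Function.injective_of_subsingleton _, fun _ => hω,
      fun _ => ⟨hdeg₁, hdeg, hcoeff⟩, one_pos, by simpa using htr⟩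
  · rintro ⟨m, β, ω, P, a₀, -, -, hβ, -, hω, -, -, htr⟩
    rw [htr]
    refine add_mem (natCast_mem_finiteOrderSums a₀) (sum_mem fun i _ => ?_)
    exact aeval_mem_finiteOrderSums (isOfFinOrder_iff_pow_eq_one.2 ⟨β i, (hβ i).1, hω i⟩) _
end

section
/- Let F be a field, let k ≥ 2 be an integer, let ω ∈ F satisfy ω^k = 1 and ω ≠ 1, and let a ∈ F. Then the 2×2 matrices B = [[a, −a], [a−ω, ω−a]] and C = [[a, a], [ω−a, ω−a]] both satisfy X^{k+1} = X and X^k ≠ X; in particular both are (k+1)-potent. -/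
open Matrix

lemma pow_succ_of_sq_smul {F : Type*} [Field F] (M : Matrix (Fin 2) (Fin 2) F)
    (ω : F) (h : M * M = ω • M) : ∀ n, M ^ (n + 1) = ω ^ n • M := by
  intro n
  induction n with
  | zero => simp
  | succ n ih =>
    rw [pow_succ, ih, smul_mul_assoc, h, smul_smul, pow_succ]

lemma key {F : Type*} [Field F] (k : ℕ) (hk : 2 ≤ k)
    (ω : F) (hω : ω ^ k = 1) (hω1 : ω ≠ 1) (M : Matrix (Fin 2) (Fin 2) F)
    (h : M * M = ω • M) (hM : M ≠ 0) :
    M ^ (k + 1) = M ∧ M ^ k ≠ M := by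
  constructor
  · rw [pow_succ_of_sq_smul M ω h, hω, one_smul]
  · have hk1 : k = (k - 1) + 1 := by omega
    rw [hk1, pow_succ_of_sq_smul M ω h]
    intro hc
    have hne : ω ^ (k - 1) ≠ 1 := by
      intro h1
      apply hω1
      have : ω ^ k = ω ^ (k - 1) * ω := by conv_lhs => rw [hk1, pow_succ]
      rw [h1, one_mul] at this
      rw [← this, hω]
    have : (ω ^ (k - 1) - 1) • M = 0 := by
      rw [sub_smul, one_smul, hc, sub_self]
    rcases smul_eq_zero.mp this with h0 | h0
    · exact hne (sub_eq_zero.mp h0)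
    · exact hM h0

theorem two_by_two_kpotent {F : Type*} [Field F] (k : ℕ) (hk : 2 ≤ k)
    (ω : F) (hω : ω ^ k = 1) (hω1 : ω ≠ 1) (a : F) :
    ((!![a, -a; a - ω, ω - a] : Matrix (Fin 2) (Fin 2) F) ^ (k + 1) =
        !![a, -a; a - ω, ω - a] ∧
      (!![a, -a; a - ω, ω - a] : Matrix (Fin 2) (Fin 2) F) ^ k ≠
        !![a, -a; a - ω, ω - a]) ∧
    ((!![a, a; ω - a, ω - a] : Matrix (Fin 2) (Fin 2) F) ^ (k + 1) =
        !![a, a; ω - a, ω - a] ∧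
      (!![a, a; ω - a, ω - a] : Matrix (Fin 2) (Fin 2) F) ^ k ≠
        !![a, a; ω - a, ω - a]) := by
  have hω0 : ω ≠ 0 := by
    intro h; rw [h, zero_pow (by omega)] at hω; exact one_ne_zero hω.symm
  constructor
  · apply key k hk ω hω hω1
    · ext i j
      fin_cases i <;> fin_cases j <;>
        simp [Matrix.mul_apply, Fin.sum_univ_two] <;> ring
    · intro h
      rcases eq_or_ne a 0 with ha | ha
      · have := congrFun (congrFun h 1) 0
        simp [ha] at this
        exact hω0 this
      · have := congrFun (congrFun h 0) 0
        simp at this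
        exact ha this
  · apply key k hk ω hω hω1
    · ext i j
      fin_cases i <;> fin_cases j <;>
        simp [Matrix.mul_apply, Fin.sum_univ_two] <;> ring
    · intro h
      rcases eq_or_ne a 0 with ha | ha
      · have := congrFun (congrFun h 1) 0
        simp [ha] at this
        exact hω0 this
      · have := congrFun (congrFun h 0) 0
        simp at this
        exact ha this
end

section
/- Let F be a field of characteristic different from 2, let k ≥ 2 be an integer, let ω ∈ F satisfy ω^k = 1 and ω ≠ 1, and let x ∈ F. Then the 2×2 diagonal matrix diag(x, 2ω − x) is a sum of two (k+1)-potent matrices over F. -/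
open Matrix

lemma pow_of_sq_smul {F : Type*} [Field F] (ω : F) (M : Matrix (Fin 2) (Fin 2) F)
    (h : M * M = ω • M) : ∀ n : ℕ, M ^ (n + 1) = ω ^ n • M := by
  intro n
  induction n with
  | zero => simp
  | succ n ih =>
    rw [pow_succ, ih, smul_mul_assoc, h, smul_smul, pow_succ]

theorem diag_sum_two_kpotent {F : Type*} [Field F] (hchar : (2 : F) ≠ 0)
    (k : ℕ) (hk : 2 ≤ k) (ω : F) (hω : ω ^ k = 1) (hω1 : ω ≠ 1) (x : F) :
    ∃ B C : Matrix (Fin 2) (Fin 2) F,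
      B ^ (k + 1) = B ∧ C ^ (k + 1) = C ∧
      (!![x, 0; 0, 2 * ω - x] : Matrix (Fin 2) (Fin 2) F) = B + C := by
  refine ⟨!![x/2, 1; x/2*(ω - x/2), ω - x/2],
          !![x/2, -1; -(x/2*(ω - x/2)), ω - x/2], ?_, ?_, ?_⟩
  · rw [pow_of_sq_smul ω _ ?_ k, hω, one_smul]
    ext i j
    fin_cases i <;> fin_cases j <;>
      simp [Matrix.mul_apply, Fin.sum_univ_two] <;> ring
  · rw [pow_of_sq_smul ω _ ?_ k, hω, one_smul]
    ext i j
    fin_cases i <;> fin_cases j <;>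
      simp [Matrix.mul_apply, Fin.sum_univ_two] <;> ring
  · ext i j
    fin_cases i <;> fin_cases j <;>
      simp [Matrix.add_apply] <;> field_simp <;> ring
end

section
/- Let k ≥ 3 be an integer, let ω = exp(2πi/k) ∈ ℂ, and let A be a complex n×n matrix with n ≥ 2 such that rank(A) = 1 and tr(A) = α·ω^j, where α is an integer with α > 3 and j is an integer with 1 < j < k. If α is even, then A is a sum of (α−2)/2 + 2 many (k+1)-potent matrices; if α is odd, then A is a sum of (α−3)/2 + 3 many (k+1)-potent matrices. -/
open Matrix

/-!
Write `A = u vᵀ`, so that `vᵀ u = tr A = α τ` with `τ = ω ^ j` a `k`-th root of unity; every `M`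
with `M * M = τ • M` satisfies `M ^ (k + 1) = M`. As `n ≥ 2`, the projection `1 - A / tr A` has
nonzero trace, and one of its columns `w` and (rescaled) rows `x` satisfy `vᵀ w = 0`, `xᵀ u = 0`,
`xᵀ w = 1`. Hence `P = A / tr A` and `Q = P + w xᵀ` are idempotent, so `τ P` and `τ Q` square to
`τ` times themselves. Writing `α = 2p + q + 2`, `A` is the sum of `p` copies of `τ Q`, `q` copies
of `τ P` and two rank-one matrices `(u ± w)(a v ± b x)ᵀ` of trace `τ` which absorb the remainder.
-/

theorem pow_succ_eq_self_of_mul_self_eq_smul {S R : Type*} [Monoid S] [Monoid R] [MulAction S R]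
    [IsScalarTower S R R] {M : R} {c : S} {k : ℕ} (hM : M * M = c • M) (hc : c ^ k = 1) :
    M ^ (k + 1) = M := by
  have hpow : ∀ m : ℕ, M ^ (m + 1) = c ^ m • M := by
    intro m
    induction m with
    | zero => simp
    | succ m ih => rw [pow_succ, ih, smul_mul_assoc, hM, smul_smul, ← pow_succ]
  rw [hpow k, hc, one_smul]

theorem IsIdempotentElem.smul_mul_smul_self {S R : Type*} [CommMonoid S] [Mul R] [MulAction S R]
    [IsScalarTower S R R] [SMulCommClass S R R] {P : R} (hP : IsIdempotentElem P) (c : S) :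
    (c • P) * (c • P) = c • c • P := by
  rw [smul_mul_smul_comm, hP.eq, smul_smul]

theorem List.exists_fin_sum_eq {M : Type*} [AddCommMonoid M] (l : List M) {n : ℕ}
    (hn : l.length = n) : ∃ E : Fin n → M, (∀ i, E i ∈ l) ∧ ∑ i, E i = l.sum := by
  subst hn
  exact ⟨fun i => l[i], fun i => List.getElem_mem _, Fin.sum_univ_getElem l⟩

namespace Matrix

variable {ι K : Type*} [Fintype ι] [Field K]

theorem exists_eq_vecMulVec_of_rank_eq_one {m : Type*} {A : Matrix m ι K} (h : A.rank = 1) :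
    ∃ (u : m → K) (v : ι → K), A = vecMulVec u v := by
  classical
  obtain ⟨u, -, hspan⟩ := finrank_eq_one_iff'.mp h
  choose f hf using hspan
  let col (j : ι) : LinearMap.range A.mulVecLin := ⟨A *ᵥ Pi.single j 1, Pi.single j 1, rfl⟩
  refine ⟨u, fun j => f (col j), ?_⟩
  ext i j
  have hcol := congr_fun (congr_arg Subtype.val (hf (col j))) i
  simpa [col, vecMulVec_apply, mul_comm] using hcol.symm

theorem vecMulVec_mul_self (u v : ι → K) :
    vecMulVec u v * vecMulVec u v = (v ⬝ᵥ u) • vecMulVec u v := by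
  rw [vecMulVec_mul_vecMulVec, vecMulVec_smul]

theorem exists_dotProduct_eq_one_of_isIdempotentElem [DecidableEq ι] {Q : Matrix ι ι K}
    (hQ : IsIdempotentElem Q) (htr : Q.trace ≠ 0) :
    ∃ w x : ι → K, Q *ᵥ w = w ∧ x ᵥ* Q = x ∧ x ⬝ᵥ w = 1 := by
  obtain ⟨i, hi⟩ : ∃ i, Q i i ≠ 0 := by
    by_contra! h
    exact htr (Finset.sum_eq_zero fun i _ => h i)
  refine ⟨Q *ᵥ Pi.single i 1, (Q i i)⁻¹ • (Pi.single i 1 ᵥ* Q), ?_, ?_, ?_⟩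
  · rw [mulVec_mulVec, hQ.eq]
  · rw [smul_vecMul, vecMul_vecMul, hQ.eq]
  · rw [smul_dotProduct, dotProduct_mulVec, vecMul_vecMul, hQ.eq]
    simp [hi]

variable {u v w x : ι → K}

theorem isIdempotentElem_inv_smul_vecMulVec (hvu : v ⬝ᵥ u ≠ 0) :
    IsIdempotentElem ((v ⬝ᵥ u)⁻¹ • vecMulVec u v) := by
  rw [IsIdempotentElem, smul_mul_smul, vecMulVec_mul_self, smul_smul, mul_assoc,
    inv_mul_cancel₀ hvu, mul_one]

theorem exists_dual_pair_of_dotProduct_ne_zero [DecidableEq ι] (hvu : v ⬝ᵥ u ≠ 0)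
    (hι : (Fintype.card ι : K) ≠ 1) :
    ∃ w x : ι → K, v ⬝ᵥ w = 0 ∧ x ⬝ᵥ u = 0 ∧ x ⬝ᵥ w = 1 := by
  have htr : (1 - (v ⬝ᵥ u)⁻¹ • vecMulVec u v).trace ≠ 0 := by
    rw [trace_sub, trace_one, trace_smul, trace_vecMulVec, dotProduct_comm u, smul_eq_mul,
      inv_mul_cancel₀ hvu]
    exact sub_ne_zero.mpr hι
  obtain ⟨w, x, hw, hx, hxw⟩ := exists_dotProduct_eq_one_of_isIdempotentElem
    (isIdempotentElem_inv_smul_vecMulVec hvu).one_sub htr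
  refine ⟨w, x, ?_, ?_, hxw⟩
  · rw [← hw, dotProduct_mulVec, vecMul_sub, vecMul_one, vecMul_smul, vecMul_vecMulVec,
      smul_smul, inv_mul_cancel₀ hvu, one_smul, sub_self, zero_dotProduct]
  · rw [← hx, ← dotProduct_mulVec, sub_mulVec, one_mulVec, smul_mulVec, vecMulVec_mulVec]
    simp [inv_mul_cancel_left₀ hvu]

theorem isIdempotentElem_inv_smul_vecMulVec_add_vecMulVec (hvu : v ⬝ᵥ u ≠ 0)
    (hvw : v ⬝ᵥ w = 0) (hxu : x ⬝ᵥ u = 0) (hxw : x ⬝ᵥ w = 1) :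
    IsIdempotentElem ((v ⬝ᵥ u)⁻¹ • vecMulVec u v + vecMulVec w x) := by
  refine (isIdempotentElem_inv_smul_vecMulVec hvu).add ?_ ?_
  · rw [IsIdempotentElem, vecMulVec_mul_self, hxw, one_smul]
  · simp only [smul_mul_assoc, mul_smul_comm, vecMulVec_mul_vecMulVec, hvw, hxu, zero_smul,
      vecMulVec_zero, smul_zero, add_zero]

theorem vecMulVec_add_smul_mul_self (hvw : v ⬝ᵥ w = 0) (hxu : x ⬝ᵥ u = 0) (hxw : x ⬝ᵥ w = 1)
    {s : K} (hs : s * s = 1) (a b : K) :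
    vecMulVec (u + s • w) (a • v + (s * b) • x) * vecMulVec (u + s • w) (a • v + (s * b) • x) =
      (a * (v ⬝ᵥ u) + b) • vecMulVec (u + s • w) (a • v + (s * b) • x) := by
  rw [vecMulVec_mul_self]
  congr 1
  simp only [add_dotProduct, dotProduct_add, smul_dotProduct, dotProduct_smul, hvw, hxu, hxw,
    smul_eq_mul]
  linear_combination b * hs

theorem exists_vecMulVec_eq_sum_mul_self_eq_smul [NeZero (2 : K)] {τ : K} (hvu : v ⬝ᵥ u ≠ 0)
    (hvw : v ⬝ᵥ w = 0) (hxu : x ⬝ᵥ u = 0) (hxw : x ⬝ᵥ w = 1) {p q : ℕ}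
    (htr : v ⬝ᵥ u = (2 * p + q + 2) * τ) :
    ∃ E : Fin (p + q + 2) → Matrix ι ι K,
      (∀ i, E i * E i = τ • E i) ∧ vecMulVec u v = ∑ i, E i := by
  set t := v ⬝ᵥ u
  -- `M₁ + M₂ = 2a • u vᵀ + 2b • w xᵀ` supplies what the copies of `τ • P`, `τ • Q` lack, and
  -- `htr` is what makes `tr M₁ = tr M₂ = τ`.
  set a : K := (1 - (p + q) * τ / t) / 2
  set b : K := -(p * τ) / 2
  have hab : a * t + b = τ := by
    simp only [a, b]
    field_simp
    linear_combination htr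
  set M₁ := vecMulVec (u + (1 : K) • w) (a • v + (1 * b) • x)
  set M₂ := vecMulVec (u + (-1 : K) • w) (a • v + (-1 * b) • x)
  set P := t⁻¹ • vecMulVec u v
  set Q := P + vecMulVec w x
  obtain ⟨E, hE, hsum⟩ := List.exists_fin_sum_eq (n := p + q + 2)
    ([M₁, M₂] ++ List.replicate p (τ • Q) ++ List.replicate q (τ • P)) (by simp)
  refine ⟨E, fun i => ?_, ?_⟩
  · simp only [List.mem_append, List.mem_cons, List.mem_replicate, List.not_mem_nil,
      or_false] at hE
    rcases hE i with ((h | h) | ⟨-, h⟩) | ⟨-, h⟩ <;> rw [h]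
    · rw [vecMulVec_add_smul_mul_self hvw hxu hxw (one_mul 1), hab]
    · rw [vecMulVec_add_smul_mul_self hvw hxu hxw (by norm_num), hab]
    · exact
        (isIdempotentElem_inv_smul_vecMulVec_add_vecMulVec hvu hvw hxu hxw).smul_mul_smul_self τ
    · exact (isIdempotentElem_inv_smul_vecMulVec hvu).smul_mul_smul_self τ
  · rw [hsum]
    simp only [List.sum_append, List.sum_cons, List.sum_nil, List.sum_replicate]
    ext i j
    simp [M₁, M₂, P, Q, a, b, vecMulVec_apply]
    field_simp
    ring

end Matrix

theorem rank_one_sum_kpotent_general (k n : ℕ) (hk : 3 ≤ k) (hn : 2 ≤ n)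
    (ω : ℂ) (hω : ω = Complex.exp (2 * Real.pi * Complex.I / k))
    (A : Matrix (Fin n) (Fin n) ℂ) (hrank : A.rank = 1)
    (α : ℤ) (hα : 3 < α) (j : ℕ)
    (htr : A.trace = (α : ℂ) * ω ^ j) :
    (Even α →
      ∃ E : Fin (((α - 2) / 2 + 2).toNat) → Matrix (Fin n) (Fin n) ℂ,
        (∀ i, E i ^ (k + 1) = E i) ∧ A = ∑ i, E i) ∧
    (Odd α →
      ∃ E : Fin (((α - 3) / 2 + 3).toNat) → Matrix (Fin n) (Fin n) ℂ,
        (∀ i, E i ^ (k + 1) = E i) ∧ A = ∑ i, E i) := by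
  have hprim : IsPrimitiveRoot ω k := hω ▸ Complex.isPrimitiveRoot_exp k (by omega)
  have hτ : (ω ^ j) ^ k = 1 := by rw [← pow_mul, mul_comm, pow_mul, hprim.pow_eq_one, one_pow]
  obtain ⟨u, v, rfl⟩ := exists_eq_vecMulVec_of_rank_eq_one hrank
  rw [trace_vecMulVec, dotProduct_comm] at htr
  have hvu : v ⬝ᵥ u ≠ 0 := by
    rw [htr]
    exact mul_ne_zero (by exact_mod_cast (by omega : α ≠ 0))
      (pow_ne_zero _ (hprim.ne_zero (by omega)))
  obtain ⟨w, x, hvw, hxu, hxw⟩ :=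
    exists_dual_pair_of_dotProduct_ne_zero hvu (by simpa using (by omega : n ≠ 1))
  have hsum (p q : ℕ) (hpq : α = 2 * p + q + 2) :
      ∃ E : Fin (p + q + 2) → Matrix (Fin n) (Fin n) ℂ,
        (∀ i, E i ^ (k + 1) = E i) ∧ vecMulVec u v = ∑ i, E i := by
    obtain ⟨E, hE, hA⟩ := exists_vecMulVec_eq_sum_mul_self_eq_smul (τ := ω ^ j) (p := p) (q := q)
      hvu hvw hxu hxw (by rw [htr, hpq]; push_cast; ring)
    exact ⟨E, fun i => pow_succ_eq_self_of_mul_self_eq_smul (hE i) hτ, hA⟩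
  refine ⟨fun ⟨r, hr⟩ => ?_, fun ⟨r, hr⟩ => ?_⟩
  · rw [show ((α - 2) / 2 + 2).toNat = (r - 1).toNat + 0 + 2 by omega]
    exact hsum _ 0 (by omega)
  · rw [show ((α - 3) / 2 + 3).toNat = (r - 1).toNat + 1 + 2 by omega]
    exact hsum _ 1 (by omega)

theorem rank_one_sum_kpotent (k n : ℕ) (hk : 3 ≤ k) (hn : 2 ≤ n)
    (ω : ℂ) (hω : ω = Complex.exp (2 * Real.pi * Complex.I / k))
    (A : Matrix (Fin n) (Fin n) ℂ) (hrank : A.rank = 1)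
    (α : ℤ) (hα : 3 < α) (j : ℕ) (hj1 : 1 < j) (hjk : j < k)
    (htr : A.trace = (α : ℂ) * ω ^ j) :
    (Even α →
      ∃ E : Fin (((α - 2) / 2 + 2).toNat) → Matrix (Fin n) (Fin n) ℂ,
        (∀ i, E i ^ (k + 1) = E i) ∧ A = ∑ i, E i) ∧
    (Odd α →
      ∃ E : Fin (((α - 3) / 2 + 3).toNat) → Matrix (Fin n) (Fin n) ℂ,
        (∀ i, E i ^ (k + 1) = E i) ∧ A = ∑ i, E i) :=
  rank_one_sum_kpotent_general k n hk hn ω hω A hrank α hα j htr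
end

section
/- Let F be a field, let k ≥ 2 be an integer, and let ω ∈ F satisfy ω^k = 1 and ω ≠ 1. If t is a lower triangular n×n matrix over F whose diagonal entries all equal 2ω, then t is a sum of four (k+1)-potent n×n matrices over F. -/
open Matrix

/-!
Write `t = ω • (2 + N)`, where `N = ω⁻¹ • t - 2` is lower triangular with zero diagonal, hence
nilpotent. A nilpotent `N` swaps the two summands of some splitting `U ⊕ W` of the whole space
(alternate the vectors along each Jordan chain). If `p` is the projection onto `U` along `W` and
`q = 1 - p`, then `p N p = 0 = q N q`, which makes `(1 + N) p` and `(1 + N) q` idempotents with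
sum `1 + N`. So `t = ω e + ω f + ω • 1 + ω • 0` with `e, f` idempotent, and `ω • e` is
`(k + 1)`-potent for every idempotent `e` because `ω ^ (k + 1) = ω`.
-/

theorem exists_le_disjoint_sup_eq {α : Type*} [Lattice α] [BoundedOrder α] [IsModularLattice α]
    [ComplementedLattice α] {a b c : α} (hab : Disjoint a b) (hac : a ≤ c) (hbc : b ≤ c) :
    ∃ a', a ≤ a' ∧ Disjoint a' b ∧ a' ⊔ b = c := by
  obtain ⟨r, hr, hsup⟩ := IsModularLattice.exists_disjoint_and_sup_eq (sup_le hac hbc)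
  refine ⟨a ⊔ r, le_sup_left, ?_, by rw [← hsup, sup_right_comm]⟩
  have har : Disjoint a (b ⊔ r) := hab.disjoint_sup_right_of_disjoint_sup_left hr
  exact (disjoint_sup_right_of_disjoint_sup_right (sup_comm r b ▸ har)
    (sup_comm a b ▸ hr.symm)).symm

namespace Module.End

open LinearMap (ker)

variable {K V : Type*} [DivisionRing K] [AddCommGroup V] [Module K V] (φ : Module.End K V)

theorem exists_swapped_decomposition_ker_pow (h : ℕ) (T : Submodule K V)
    (hT : T ≤ ker (φ ^ (h + 1))) (hTh : Disjoint T (ker (φ ^ h))) :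
    ∃ U W : Submodule K V, T ≤ U ∧ Disjoint U W ∧ U ⊔ W = ker (φ ^ (h + 1)) ∧
      U.map φ ≤ W ∧ W.map φ ≤ U := by
  -- A complement `S ⊇ T` of `ker φ^(h+1)` in `ker φ^(h+2)` goes into `U`; `φ S` seeds the
  -- splitting of `ker φ^(h+1)`.
  induction h generalizing T with
  | zero =>
    exact ⟨ker φ, ⊥, by simpa using hT, disjoint_bot_right, by simp,
      Submodule.map_le_iff_le_comap.mpr (Submodule.comap_bot φ).ge, by simp⟩
  | succ h ih =>
    have hker : ker (φ ^ (h + 1)) ≤ ker (φ ^ (h + 2)) := fun x hx => by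
      rw [LinearMap.mem_ker] at hx ⊢
      rw [pow_succ', Module.End.mul_apply, hx, map_zero]
    obtain ⟨S, hTS, hS, hSsup⟩ := exists_le_disjoint_sup_eq hTh hT hker
    have hSker : S ≤ ker (φ ^ (h + 2)) := hSsup ▸ le_sup_left
    have hφS : S.map φ ≤ ker (φ ^ (h + 1)) := by
      rintro _ ⟨x, hx, rfl⟩
      simpa [LinearMap.mem_ker, pow_succ] using hSker hx
    have hφSh : Disjoint (S.map φ) (ker (φ ^ h)) := by
      rw [Submodule.disjoint_def]
      rintro _ ⟨x, hx, rfl⟩ hφx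
      have hx' : x ∈ ker (φ ^ (h + 1)) := by simpa [pow_succ] using hφx
      simp [Submodule.disjoint_def.mp hS x hx hx']
    obtain ⟨U, W, hSU, hUW, hsup, hU, hW⟩ := ih _ hφS hφSh
    refine ⟨S ⊔ W, U, hTS.trans le_sup_left, ?_, ?_, ?_, ?_⟩
    · exact hUW.symm.disjoint_sup_left_of_disjoint_sup_right (sup_comm U W ▸ hsup ▸ hS)
    · rw [sup_assoc, sup_comm W, hsup, hSsup]
    · rw [Submodule.map_sup]; exact sup_le hSU hW
    · exact hU.trans le_sup_right

theorem exists_isCompl_swapped_of_isNilpotent (hφ : IsNilpotent φ) :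
    ∃ U W : Submodule K V, IsCompl U W ∧ U.map φ ≤ W ∧ W.map φ ≤ U := by
  obtain ⟨n, hn⟩ := hφ
  have hker : ker (φ ^ (n + 1)) = ⊤ := by rw [pow_succ, hn, zero_mul, LinearMap.ker_zero]
  obtain ⟨U, W, -, hUW, hsup, hU, hW⟩ :=
    exists_swapped_decomposition_ker_pow φ n ⊥ bot_le disjoint_bot_left
  exact ⟨U, W, ⟨hUW, codisjoint_iff.mpr (hsup.trans hker)⟩, hU, hW⟩

end Module.End

theorem Submodule.projection_mul_mul_projection_eq_zero {R E : Type*} [Ring R] [AddCommGroup E]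
    [Module R E] {p q : Submodule R E} (hpq : IsCompl p q) {φ : Module.End R E}
    (hφ : p.map φ ≤ q) : p.projection q hpq * φ * p.projection q hpq = 0 := by
  ext x
  simpa using (projection_apply_eq_zero_iff hpq).mpr (hφ ⟨_, projection_apply_mem hpq x, rfl⟩)

theorem IsIdempotentElem.one_add_mul {R : Type*} [Semiring R] {p a : R}
    (hp : IsIdempotentElem p) (h : p * a * p = 0) : IsIdempotentElem ((1 + a) * p) := by
  have hpap : p * ((1 + a) * p) = p := by
    rw [add_mul, one_mul, mul_add, ← mul_assoc, h, add_zero, hp.eq]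
  rw [IsIdempotentElem, mul_assoc, hpap]

theorem Module.End.exists_isIdempotentElem_add_eq_one_add {K V : Type*} [DivisionRing K]
    [AddCommGroup V] [Module K V] {φ : Module.End K V} (hφ : IsNilpotent φ) :
    ∃ e f : Module.End K V, IsIdempotentElem e ∧ IsIdempotentElem f ∧ e + f = 1 + φ := by
  obtain ⟨U, W, hUW, hU, hW⟩ := exists_isCompl_swapped_of_isNilpotent φ hφ
  refine ⟨(1 + φ) * U.projection W hUW, (1 + φ) * W.projection U hUW.symm,
    (Submodule.isIdempotentElem_projection hUW).one_add_mul
      (Submodule.projection_mul_mul_projection_eq_zero hUW hU),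
    (Submodule.isIdempotentElem_projection hUW.symm).one_add_mul
      (Submodule.projection_mul_mul_projection_eq_zero hUW.symm hW), ?_⟩
  rw [← mul_add, Submodule.projection_add_projection_eq_id, ← Module.End.one_eq_id, mul_one]

namespace Matrix

open Polynomial

variable {R n : Type*} [CommRing R] [Fintype n] [DecidableEq n] [LinearOrder n]

theorem charpoly_of_isLowerTriangular (M : Matrix n n R) (h : M.IsLowerTriangular) :
    M.charpoly = ∏ i : n, (X - C (M i i)) := by
  simp [charpoly, det_of_isLowerTriangular _ h.charmatrix]

theorem IsLowerTriangular.isNilpotent {M : Matrix n n R} (h : M.IsLowerTriangular)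
    (hdiag : M.diag = 0) : IsNilpotent M := by
  have hchar : M.charpoly = X ^ Fintype.card n := by
    simp [charpoly_of_isLowerTriangular M h, show ∀ i, M i i = 0 from congrFun hdiag]
  exact ⟨Fintype.card n, by simpa [hchar] using aeval_self_charpoly M⟩

end Matrix

theorem Matrix.exists_isIdempotentElem_add_eq_one_add {K n : Type*} [Field K] [Fintype n]
    [DecidableEq n] {N : Matrix n n K} (hN : IsNilpotent N) :
    ∃ e f : Matrix n n K, IsIdempotentElem e ∧ IsIdempotentElem f ∧ e + f = 1 + N := by
  let Φ := Matrix.toLinAlgEquiv' (R := K) (n := n)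
  obtain ⟨e, f, he, hf, hef⟩ := Module.End.exists_isIdempotentElem_add_eq_one_add (hN.map Φ)
  refine ⟨Φ.symm e, Φ.symm f, he.map Φ.symm, hf.map Φ.symm, ?_⟩
  rw [← map_add, hef, map_add, map_one, AlgEquiv.symm_apply_apply]

theorem IsIdempotentElem.smul_pow_succ_eq {R A : Type*} [Monoid R] [Monoid A] [MulAction R A]
    [IsScalarTower R A A] [SMulCommClass R A A] {c : R} {e : A} {k : ℕ}
    (he : IsIdempotentElem e) (hc : c ^ (k + 1) = c) : (c • e) ^ (k + 1) = c • e := by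
  rw [smul_pow, he.pow_succ_eq, hc]

theorem lower_triangular_sum_four_kpotent_general {F : Type*} [Field F]
    (k n : ℕ) (hk : 2 ≤ k) (ω : F) (hω : ω ^ k = 1)
    (t : Matrix (Fin n) (Fin n) F)
    (hlt : ∀ i j : Fin n, i < j → t i j = 0)
    (hdiag : ∀ i : Fin n, t i i = 2 * ω) :
    ∃ E : Fin 4 → Matrix (Fin n) (Fin n) F,
      (∀ i, E i ^ (k + 1) = E i) ∧ t = ∑ i, E i := by
  have hω0 : ω ≠ 0 := by rintro rfl; simp [zero_pow (by omega : k ≠ 0)] at hω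
  set N : Matrix (Fin n) (Fin n) F := ω⁻¹ • t - 2
  have hN : IsNilpotent N := by
    refine Matrix.IsLowerTriangular.isNilpotent (fun i j hij => ?_) (funext fun i => ?_)
    · have hij : i < j := hij
      simp [N, hlt i j hij, Matrix.ofNat_apply, hij.ne]
    · simp [N, hdiag, Matrix.ofNat_apply, mul_comm ω⁻¹, mul_inv_cancel_right₀ hω0]
  obtain ⟨e, f, he, hf, hef⟩ := Matrix.exists_isIdempotentElem_add_eq_one_add hN
  let P : Fin 4 → Matrix (Fin n) (Fin n) F := ![e, f, 1, 0]
  have hP : ∀ i, IsIdempotentElem (P i) := by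
    simp [P, Fin.forall_fin_succ, he, hf, IsIdempotentElem.one, IsIdempotentElem.zero]
  refine ⟨fun i => ω • P i, fun i => (hP i).smul_pow_succ_eq (by rw [pow_succ, hω, one_mul]), ?_⟩
  rw [← Finset.smul_sum, Fin.sum_univ_four]
  calc t = ω • (1 + N + 1) := by
        rw [add_right_comm, one_add_one_eq_two, add_sub_cancel, smul_smul,
          mul_inv_cancel₀ hω0, one_smul]
    _ = ω • (P 0 + P 1 + P 2 + P 3) := by simp [P, hef]

theorem lower_triangular_sum_four_kpotent {F : Type*} [Field F]
    (k n : ℕ) (hk : 2 ≤ k) (ω : F) (hω : ω ^ k = 1) (hω1 : ω ≠ 1)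
    (t : Matrix (Fin n) (Fin n) F)
    (hlt : ∀ i j : Fin n, i < j → t i j = 0)
    (hdiag : ∀ i : Fin n, t i i = 2 * ω) :
    ∃ E : Fin 4 → Matrix (Fin n) (Fin n) F,
      (∀ i, E i ^ (k + 1) = E i) ∧ t = ∑ i, E i :=
  lower_triangular_sum_four_kpotent_general k n hk ω hω t hlt hdiag
end

section
/- Let F be a field and let ω ∈ F with ω ≠ 0. Let t be an upper triangular F-linear endomorphism of ℕ →₀ F with t_{nn} = ω for all n and t_{n,n+1} ≠ 0 for all n. Then there is an F-linear automorphism g of ℕ →₀ F such that the conjugate s = g ∘ t ∘ g⁻¹ satisfies s_{nn} = ω for all n, s_{n,n+1} = t_{n,n+1} for all n, and s_{ij} = 0 for all other pairs (i,j). -/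
open Finsupp Finset

section Aux

variable {F : Type*} [Field F]

/-- residual part of `N` applied to a basis vector. -/
noncomputable def rDef (N : Module.End F (ℕ →₀ F)) (c : ℕ → F) (k : ℕ) : ℕ →₀ F :=
  N (Finsupp.single (k+1) 1) - c k • Finsupp.single k 1

/-- Right inverse of `N` on basis vectors, defined by triangular back-substitution. -/
noncomputable def mAux (N : Module.End F (ℕ →₀ F)) (c : ℕ → F) : ℕ → (ℕ →₀ F)
  | k => (c k)⁻¹ • (Finsupp.single (k+1) 1 -
      ∑ j ∈ (Finset.range k).attach, rDef N c k (j : ℕ) • mAux N c j)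
  termination_by k => k
  decreasing_by exact Finset.mem_range.mp j.2

lemma mAux_def (N : Module.End F (ℕ →₀ F)) (c : ℕ → F) (k : ℕ) :
    mAux N c k = (c k)⁻¹ • (Finsupp.single (k+1) 1 -
      ∑ j ∈ Finset.range k, rDef N c k j • mAux N c j) := by
  rw [mAux, Finset.sum_attach (Finset.range k) (fun j => rDef N c k j • mAux N c j)]

lemma mAux_apply_zero (N : Module.End F (ℕ →₀ F)) (c : ℕ → F) :
    ∀ k j, k + 1 < j → mAux N c k j = 0 := by
  intro k
  induction k using Nat.strong_induction_on with
  | _ k ih =>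
    intro j hj
    rw [mAux_def]
    rw [Finsupp.smul_apply, Finsupp.sub_apply, Finsupp.single_apply,
      Finsupp.finset_sum_apply]
    rw [if_neg (by omega)]
    rw [Finset.sum_eq_zero, sub_zero, smul_zero]
    intro i hi
    rw [Finsupp.smul_apply, ih i (Finset.mem_range.mp hi) j (by
      have := Finset.mem_range.mp hi; omega), smul_zero]

lemma mAux_apply_succ (N : Module.End F (ℕ →₀ F)) (c : ℕ → F) (k : ℕ) :
    mAux N c k (k+1) = (c k)⁻¹ := by
  rw [mAux_def]
  rw [Finsupp.smul_apply, Finsupp.sub_apply, Finsupp.single_apply, if_pos rfl,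
    Finsupp.finset_sum_apply]
  rw [Finset.sum_eq_zero, sub_zero, smul_eq_mul, mul_one]
  intro i hi
  rw [Finsupp.smul_apply, mAux_apply_zero N c i (k+1) (by
    have := Finset.mem_range.mp hi; omega), smul_zero]

/-- expansion of a finsupp supported below `n` as a sum over `range n`. -/
lemma sum_range_single {x : ℕ →₀ F} {n : ℕ} (h : ∀ j, n ≤ j → x j = 0) :
    ∑ j ∈ Finset.range n, Finsupp.single j (x j) = x := by
  have hsub : x.support ⊆ Finset.range n := by
    intro j hj
    rw [Finset.mem_range]
    by_contra hc
    exact Finsupp.mem_support_iff.mp hj (h j (le_of_not_gt hc))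
  have h2 : ∑ j ∈ Finset.range n, Finsupp.single j (x j)
      = ∑ j ∈ x.support, Finsupp.single j (x j) :=
    (Finset.sum_subset hsub (by
      intro j _ hj
      rw [Finsupp.notMem_support_iff.mp hj, Finsupp.single_zero])).symm
  rw [h2]
  exact Finsupp.sum_single x

lemma sum_range_smul {M : Type*} [AddCommMonoid M] [Module F M]
    {x : ℕ →₀ F} {n : ℕ} (h : ∀ j, n ≤ j → x j = 0) (f : ℕ → M) :
    x.sum (fun j a => a • f j) = ∑ j ∈ Finset.range n, x j • f j := by
  have hsub : x.support ⊆ Finset.range n := by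
    intro j hj
    rw [Finset.mem_range]
    by_contra hc
    exact Finsupp.mem_support_iff.mp hj (h j (le_of_not_gt hc))
  rw [Finsupp.sum]
  exact Finset.sum_subset hsub (by
    intro j _ hj
    rw [Finsupp.notMem_support_iff.mp hj, zero_smul])

lemma N_mAux (N : Module.End F (ℕ →₀ F)) (c : ℕ → F) (hc : ∀ k, c k ≠ 0)
    (hr : ∀ k j, k ≤ j → rDef N c k j = 0) :
    ∀ k, N (mAux N c k) = Finsupp.single k 1 := by
  intro k
  induction k using Nat.strong_induction_on with
  | _ k ih =>
    rw [mAux_def, map_smul, map_sub, map_sum]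
    have h1 : ∀ j ∈ Finset.range k, N (rDef N c k j • mAux N c j)
        = Finsupp.single j (rDef N c k j) := by
      intro j hj
      rw [map_smul, ih j (Finset.mem_range.mp hj), Finsupp.smul_single, smul_eq_mul, mul_one]
    rw [Finset.sum_congr rfl h1]
    rw [sum_range_single (fun j hj => hr k j hj)]
    have h3 : N (Finsupp.single (k+1) (1:F)) - rDef N c k = c k • Finsupp.single k 1 := by
      rw [rDef]; abel
    rw [h3, smul_smul, inv_mul_cancel₀ (hc k), one_smul]

/-- the triangular basis. -/
noncomputable def vAux (N : Module.End F (ℕ →₀ F)) (c : ℕ → F) : ℕ → (ℕ →₀ F)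
  | 0 => Finsupp.single 0 1
  | n+1 => c n • ((vAux N c n).sum fun j a => a • mAux N c j)

lemma vAux_support : ∀ {N : Module.End F (ℕ →₀ F)} {c : ℕ → F} (_ : ∀ k, c k ≠ 0) (n : ℕ),
    (∀ j, n < j → vAux N c n j = 0) ∧ vAux N c n n = 1 := by
  intro N c hc n
  induction n with
  | zero =>
    constructor
    · intro j hj; rw [vAux, Finsupp.single_apply, if_neg (by omega)]
    · rw [vAux, Finsupp.single_apply, if_pos rfl]
  | succ n ih =>
    have key : ∀ j, n + 1 ≤ j →
        ((vAux N c n).sum fun i a => a • mAux N c i) j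
          = if j = n + 1 then (c n)⁻¹ else 0 := by
      intro j hj
      rw [Finsupp.sum_apply]
      rw [Finsupp.sum]
      rcases eq_or_lt_of_le hj with h | h
      · rw [if_pos h.symm]
        rw [Finset.sum_eq_single n]
        · rw [← h, Finsupp.smul_apply, ih.2, mAux_apply_succ, one_smul]
        · intro b hb hbn
          have hble : b ≤ n := by
            by_contra hbc
            exact Finsupp.mem_support_iff.mp hb (ih.1 b (by omega))
          rw [Finsupp.smul_apply, mAux_apply_zero N c b j (by omega), smul_zero]
        · intro hn
          rw [Finsupp.smul_apply, Finsupp.notMem_support_iff.mp hn, zero_smul]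
      · rw [if_neg (by omega)]
        apply Finset.sum_eq_zero
        intro b hb
        have hble : b ≤ n := by
          by_contra hbc
          exact Finsupp.mem_support_iff.mp hb (ih.1 b (by omega))
        rw [Finsupp.smul_apply, mAux_apply_zero N c b j (by omega), smul_zero]
    constructor
    · intro j hj
      rw [vAux, Finsupp.smul_apply, key j (by omega), if_neg (by omega), smul_zero]
    · rw [vAux, Finsupp.smul_apply, key (n+1) le_rfl, if_pos rfl, smul_eq_mul,
        mul_inv_cancel₀ (hc n)]

lemma N_vAux_succ (N : Module.End F (ℕ →₀ F)) (c : ℕ → F) (hc : ∀ k, c k ≠ 0)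
    (hr : ∀ k j, k ≤ j → rDef N c k j = 0)
    (n : ℕ) : N (vAux N c (n+1)) = c n • vAux N c n := by
  rw [vAux, map_smul]
  congr 1
  rw [Finsupp.sum, map_sum]
  have h1 : ∀ j ∈ (vAux N c n).support, N (vAux N c n j • mAux N c j)
      = Finsupp.single j (vAux N c n j) := by
    intro j _
    rw [map_smul, N_mAux N c hc hr j, Finsupp.smul_single, smul_eq_mul, mul_one]
  rw [Finset.sum_congr rfl h1]
  exact Finsupp.sum_single (vAux N c n)

/-- lower part of `vAux`. -/
noncomputable def dDef (N : Module.End F (ℕ →₀ F)) (c : ℕ → F) (n : ℕ) : ℕ →₀ F :=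
  vAux N c n - Finsupp.single n 1

lemma dDef_apply (N : Module.End F (ℕ →₀ F)) (c : ℕ → F) (n j : ℕ) :
    dDef N c n j = vAux N c n j - (Finsupp.single n 1 : ℕ →₀ F) j := rfl

/-- inverse change of basis on basis vectors. -/
noncomputable def hAux (N : Module.End F (ℕ →₀ F)) (c : ℕ → F) : ℕ → (ℕ →₀ F)
  | n => Finsupp.single n 1 - ∑ j ∈ (Finset.range n).attach,
      dDef N c n (j : ℕ) • hAux N c j
  termination_by n => n
  decreasing_by exact Finset.mem_range.mp j.2

lemma hAux_def (N : Module.End F (ℕ →₀ F)) (c : ℕ → F) (n : ℕ) :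
    hAux N c n = Finsupp.single n 1 - ∑ j ∈ Finset.range n,
      dDef N c n j • hAux N c j := by
  rw [hAux, Finset.sum_attach (Finset.range n)
    (fun j => dDef N c n j • hAux N c j)]

lemma diff_support (N : Module.End F (ℕ →₀ F)) (c : ℕ → F) (hc : ∀ k, c k ≠ 0) (n : ℕ) :
    ∀ j, n ≤ j → dDef N c n j = 0 := by
  intro j hj
  rcases eq_or_lt_of_le hj with h | h
  · rw [dDef_apply, ← h, (vAux_support hc n).2, Finsupp.single_apply, if_pos rfl, sub_self]
  · rw [dDef_apply, (vAux_support hc n).1 j h, Finsupp.single_apply, if_neg (by omega),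
      sub_self]

lemma H_vAux (N : Module.End F (ℕ →₀ F)) (c : ℕ → F) (hc : ∀ k, c k ≠ 0) (n : ℕ) :
    Finsupp.linearCombination F (hAux N c) (vAux N c n) = Finsupp.single n 1 := by
  have h0 : vAux N c n = Finsupp.single n 1 + dDef N c n := by rw [dDef]; abel
  rw [h0, map_add, Finsupp.linearCombination_single, one_smul,
    Finsupp.linearCombination_apply,
    sum_range_smul (diff_support N c hc n) (hAux N c), hAux_def]
  abel

lemma G_hAux (N : Module.End F (ℕ →₀ F)) (c : ℕ → F) (hc : ∀ k, c k ≠ 0) :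
    ∀ n, Finsupp.linearCombination F (vAux N c) (hAux N c n) = Finsupp.single n 1 := by
  intro n
  induction n using Nat.strong_induction_on with
  | _ n ih =>
    rw [hAux_def, map_sub, map_sum, Finsupp.linearCombination_single, one_smul]
    have h1 : ∀ j ∈ Finset.range n,
        Finsupp.linearCombination F (vAux N c) (dDef N c n j • hAux N c j)
          = Finsupp.single j (dDef N c n j) := by
      intro j hj
      rw [map_smul, ih j (Finset.mem_range.mp hj), Finsupp.smul_single, smul_eq_mul, mul_one]
    rw [Finset.sum_congr rfl h1, sum_range_single (diff_support N c hc n)]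
    simp only [dDef]
    abel

end Aux

theorem conjugate_to_bidiagonal {F : Type*} [Field F] (ω : F) (hω : ω ≠ 0)
    (t : Module.End F (ℕ →₀ F))
    (hupper : ∀ i j : ℕ, j < i → t (Finsupp.single j 1) i = 0)
    (hdiag : ∀ n : ℕ, t (Finsupp.single n 1) n = ω)
    (hsup : ∀ n : ℕ, t (Finsupp.single (n + 1) 1) n ≠ 0) :
    ∃ g : (ℕ →₀ F) ≃ₗ[F] (ℕ →₀ F),
      ∃ s : Module.End F (ℕ →₀ F),
        s = (g : (ℕ →₀ F) →ₗ[F] (ℕ →₀ F)) ∘ₗ t ∘ₗ (g.symm : (ℕ →₀ F) →ₗ[F] (ℕ →₀ F)) ∧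
        (∀ n : ℕ, s (Finsupp.single n 1) n = ω) ∧
        (∀ n : ℕ, s (Finsupp.single (n + 1) 1) n = t (Finsupp.single (n + 1) 1) n) ∧
        (∀ i j : ℕ, i ≠ j → j ≠ i + 1 → s (Finsupp.single j 1) i = 0) := by
  classical
  set c : ℕ → F := fun n => t (Finsupp.single (n+1) 1) n with hcdef
  have hc : ∀ k, c k ≠ 0 := hsup
  set N : Module.End F (ℕ →₀ F) := t - ω • LinearMap.id with hNdef
  have hNapp : ∀ x : ℕ →₀ F, N x = t x - ω • x := fun x => rfl
  have htapp : ∀ x : ℕ →₀ F, t x = N x + ω • x := by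
    intro x; rw [hNapp]; abel
  have hr : ∀ k j, k ≤ j → rDef N c k j = 0 := by
    intro k j hj
    rw [rDef, Finsupp.sub_apply, hNapp, Finsupp.sub_apply, Finsupp.smul_apply, Finsupp.smul_apply,
      Finsupp.single_apply, Finsupp.single_apply]
    rcases Nat.lt_trichotomy j (k+1) with h | h | h
    · have hjk : j = k := by omega
      subst hjk
      rw [if_neg (by omega), if_pos rfl, smul_zero, smul_eq_mul, mul_one]
      simp [hcdef]
    · subst h
      rw [hdiag, if_pos rfl, if_neg (by omega), smul_eq_mul, mul_one, smul_zero]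
      ring
    · rw [hupper j (k+1) h, if_neg (by omega), if_neg (by omega), smul_zero, smul_zero]
      ring
  have hN0 : N (Finsupp.single 0 (1:F)) = 0 := by
    apply Finsupp.ext
    intro i
    rw [hNapp, Finsupp.sub_apply, Finsupp.smul_apply, Finsupp.single_apply]
    rcases Nat.eq_zero_or_pos i with h | h
    · subst h; rw [hdiag 0, if_pos rfl, smul_eq_mul, mul_one]; simp
    · rw [hupper i 0 h, if_neg (by omega), smul_zero]; simp
  set G : (ℕ →₀ F) →ₗ[F] (ℕ →₀ F) := Finsupp.linearCombination F (vAux N c) with hGdef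
  set H : (ℕ →₀ F) →ₗ[F] (ℕ →₀ F) := Finsupp.linearCombination F (hAux N c) with hHdef
  have hHG : H ∘ₗ G = LinearMap.id := by
    apply Finsupp.lhom_ext
    intro a b
    have hb : (Finsupp.single a b : ℕ →₀ F) = b • Finsupp.single a 1 := by
      rw [Finsupp.smul_single, smul_eq_mul, mul_one]
    rw [hb, map_smul, map_smul, LinearMap.comp_apply, hGdef,
      Finsupp.linearCombination_single, one_smul, hHdef, H_vAux N c hc a, LinearMap.id_apply]
  have hGH : G ∘ₗ H = LinearMap.id := by
    apply Finsupp.lhom_ext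
    intro a b
    have hb : (Finsupp.single a b : ℕ →₀ F) = b • Finsupp.single a 1 := by
      rw [Finsupp.smul_single, smul_eq_mul, mul_one]
    rw [hb, map_smul, map_smul, LinearMap.comp_apply, hHdef,
      Finsupp.linearCombination_single, one_smul, hGdef, G_hAux N c hc a, LinearMap.id_apply]
  have hs : ∀ n : ℕ, (H ∘ₗ t ∘ₗ G) (Finsupp.single n 1) =
      ω • Finsupp.single n 1 + (if n = 0 then 0 else c (n-1) • Finsupp.single (n-1) 1) := by
    intro n
    rw [LinearMap.comp_apply, LinearMap.comp_apply, hGdef, Finsupp.linearCombination_single,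
      one_smul]
    cases n with
    | zero =>
      rw [htapp, if_pos rfl, add_zero]
      have h0 : vAux N c 0 = Finsupp.single 0 1 := rfl
      have hh0 : hAux N c 0 = Finsupp.single 0 1 := by
        rw [hAux_def]; simp
      rw [h0, hN0, zero_add, map_smul, hHdef, Finsupp.linearCombination_single, one_smul, hh0]
    | succ n =>
      rw [htapp, if_neg (Nat.succ_ne_zero n), N_vAux_succ N c hc hr n, map_add, map_smul,
        map_smul, hHdef, H_vAux N c hc, H_vAux N c hc]
      simp [add_comm]
  refine ⟨LinearEquiv.ofLinear H G hHG hGH, H ∘ₗ t ∘ₗ G, rfl, ?_, ?_, ?_⟩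
  · intro n
    rw [hs, Finsupp.add_apply, Finsupp.smul_apply, Finsupp.single_apply, if_pos rfl, smul_eq_mul,
      mul_one]
    cases n with
    | zero => simp
    | succ n =>
      rw [if_neg (Nat.succ_ne_zero n), Finsupp.smul_apply, Finsupp.single_apply,
        if_neg (by omega), smul_zero, add_zero]
  · intro n
    rw [hs, Finsupp.add_apply, if_neg (Nat.succ_ne_zero n)]
    simp only [Nat.add_sub_cancel]
    rw [Finsupp.smul_apply, Finsupp.single_apply, if_neg (by omega), smul_zero, zero_add,
      Finsupp.smul_apply, Finsupp.single_apply, if_pos rfl, smul_eq_mul, mul_one]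
  · intro i j hij hji
    rw [hs, Finsupp.add_apply, Finsupp.smul_apply, Finsupp.single_apply,
      if_neg (fun h => hij h.symm), smul_zero, zero_add]
    rcases Nat.eq_zero_or_pos j with h | h
    · subst h; rw [if_pos rfl]; rfl
    · rw [if_neg (by omega), Finsupp.smul_apply, Finsupp.single_apply,
        if_neg (by omega), smul_zero]
end

section
/- Let F be a field, let k ≥ 2 be an integer, and let ω ∈ F satisfy ω^k = 1 and ω ≠ 1. If t is an upper triangular F-linear endomorphism of ℕ →₀ F with t_{nn} = 2ω for all n, then t is a sum of four (k+1)-potent F-linear endomorphisms of ℕ →₀ F. -/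
/-!
Dividing by `ω` (and using `ω ^ (k + 1) = ω`, so that `ω` times an idempotent is
`(k + 1)`-potent), it suffices to write `u = 2 + N`, `N` strictly upper triangular, as a sum
of four idempotents.

If `e` is idempotent and `b` is off-diagonal for `e` (`e b e = 0 = (1 - e) b (1 - e)`), then
`1 + b = (e + e b (1 - e)) + ((1 - e) + (1 - e) b e)` is a sum of two idempotents. Let `e` be the
projection onto the even coordinates and `S` the backward shift, which is off-diagonal for `e`.
Split `N = x + (N - x)` with `x = S + e N e + (1 - e) N (1 - e)`; then `N - x` is off-diagonal
for `e`. The diagonal blocks of `N` vanish on the superdiagonal (`i` and `i + 1` have different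
parities), so `x` is strictly upper triangular with ones on the superdiagonal: it is locally
nilpotent and surjective, with a right inverse `r`. Then `ℕ →₀ F` is the direct sum of the
levels `r ^ i (ker x)`, the projections onto them are `r ^ i (1 - r x) x ^ i`, and `x` maps
level `i + 1` to level `i`. The projection onto the even levels is an idempotent for which `x`
is off-diagonal, so `1 + x` is also a sum of two idempotents, and `u = (1 + x) + (1 + (N - x))`.
-/

open Finset

section BlockDecomposition

variable {A : Type*} [Ring A] {e : A}

def blockDiag (e a : A) : A := e * a * e + (1 - e) * a * (1 - e)

theorem blockDiag_one_sub (e a : A) : blockDiag (1 - e) a = blockDiag e a := by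
  rw [blockDiag, blockDiag, sub_sub_cancel, add_comm]

namespace IsIdempotentElem

theorem add_mul_mul_one_sub (he : IsIdempotentElem e) (b : A) :
    IsIdempotentElem (e + e * b * (1 - e)) := by
  have hfe : ∀ x, (1 - e) * (e * x) = 0 := fun x => by
    rw [← mul_assoc, he.one_sub_mul_self, zero_mul]
  simp only [IsIdempotentElem, add_mul, mul_add, mul_assoc, he.eq, he.mul_self_mul, hfe,
    he.one_sub_mul_self, mul_zero, add_zero]

theorem mul_sub_blockDiag_mul (he : IsIdempotentElem e) (a : A) :
    e * (a - blockDiag e a) * e = 0 := by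
  have hef : ∀ x, e * ((1 - e) * x) = 0 := fun x => by
    rw [← mul_assoc, he.mul_one_sub_self, zero_mul]
  rw [blockDiag]
  generalize 1 - e = f at hef
  simp only [mul_sub, sub_mul, mul_add, mul_assoc, he.mul_self_mul, he.eq, hef, add_zero,
    sub_self]

theorem exists_add_eq_one_add (he : IsIdempotentElem e) {b : A} (hb : e * b * e = 0)
    (hb' : (1 - e) * b * (1 - e) = 0) :
    ∃ p q : A, IsIdempotentElem p ∧ IsIdempotentElem q ∧ p + q = 1 + b := by
  refine ⟨_, _, he.add_mul_mul_one_sub b, he.one_sub.add_mul_mul_one_sub b, ?_⟩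
  have hb_eq :
      b = e * b * e + e * b * (1 - e) + ((1 - e) * b * e + (1 - e) * b * (1 - e)) := by
    noncomm_ring
  rw [sub_sub_cancel]
  conv_rhs => rw [hb_eq, hb, hb']
  abel

theorem exists_four_sum_eq (he : IsIdempotentElem e) {s u : A} (hs : e * s * e = 0)
    (hs' : (1 - e) * s * (1 - e) = 0)
    (hx : ∃ p q : A, IsIdempotentElem p ∧ IsIdempotentElem q ∧
      p + q = 1 + (s + blockDiag e (u - 2))) :
    ∃ E : Fin 4 → A, (∀ i, IsIdempotentElem (E i)) ∧ ∑ i, E i = u := by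
  obtain ⟨p₁, p₂, hp₁, hp₂, h₁₂⟩ := hx
  obtain ⟨p₃, p₄, hp₃, hp₄, h₃₄⟩ :=
    he.exists_add_eq_one_add (b := u - 2 - blockDiag e (u - 2) - s)
      (by rw [mul_sub, sub_mul, hs, sub_zero, he.mul_sub_blockDiag_mul])
      (by rw [mul_sub (1 - e) _ s, sub_mul _ _ (1 - e), hs', sub_zero, ← blockDiag_one_sub,
        he.one_sub.mul_sub_blockDiag_mul])
  refine ⟨![p₁, p₂, p₃, p₄], fun i => by fin_cases i <;> assumption, ?_⟩
  calc ∑ i, ![p₁, p₂, p₃, p₄] i = (p₁ + p₂) + (p₃ + p₄) := by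
        simp only [Fin.sum_univ_four, Matrix.cons_val, add_assoc]
    _ = u := by rw [h₁₂, h₃₄, ← one_add_one_eq_two]; abel

end IsIdempotentElem

end BlockDecomposition

section RightInverse

variable {A : Type*} [Ring A] {x r : A}

def levelProj (x r : A) (i : ℕ) : A := r ^ i * (1 - r * x) * x ^ i

def levelSum (x r : A) (S : ℕ → Prop) [DecidablePred S] (n : ℕ) : A :=
  ∑ i ∈ (range n).filter S, levelProj x r i

variable (h : x * r = 1)
include h

theorem pow_mul_pow_of_le {i j : ℕ} (hij : i ≤ j) : x ^ i * r ^ j = r ^ (j - i) := by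
  obtain ⟨d, rfl⟩ := Nat.exists_eq_add_of_le hij
  rw [pow_add, ← mul_assoc, pow_mul_pow_eq_one i h, one_mul, Nat.add_sub_cancel_left]

theorem pow_mul_pow_of_ge {i j : ℕ} (hij : j ≤ i) : x ^ i * r ^ j = x ^ (i - j) := by
  obtain ⟨d, rfl⟩ := Nat.exists_eq_add_of_le hij
  rw [add_comm, pow_add, mul_assoc, pow_mul_pow_eq_one j h, mul_one, Nat.add_sub_cancel]

theorem mul_one_sub_mul_self : x * (1 - r * x) = 0 := by
  rw [mul_sub, mul_one, ← mul_assoc, h, one_mul, sub_self]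

theorem one_sub_mul_self_mul : (1 - r * x) * r = 0 := by
  rw [sub_mul, one_mul, mul_assoc, h, mul_one, sub_self]

theorem isIdempotentElem_one_sub_mul : IsIdempotentElem (1 - r * x) :=
  IsIdempotentElem.one_sub <| by rw [IsIdempotentElem, mul_assoc, ← mul_assoc x, h, one_mul]

theorem levelProj_mul_levelProj (i j : ℕ) :
    levelProj x r i * levelProj x r j = if i = j then levelProj x r i else 0 := by
  have hassoc : levelProj x r i * levelProj x r j
      = r ^ i * ((1 - r * x) * (x ^ i * r ^ j) * (1 - r * x)) * x ^ j := by
    simp only [levelProj, mul_assoc]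
  rw [hassoc]
  rcases lt_trichotomy i j with hij | rfl | hij
  · rw [pow_mul_pow_of_le h hij.le, ← Nat.succ_pred_eq_of_pos (Nat.sub_pos_of_lt hij),
      pow_succ', ← mul_assoc (1 - r * x), one_sub_mul_self_mul h, if_neg hij.ne]
    simp only [zero_mul, mul_zero]
  · rw [pow_mul_pow_eq_one i h, mul_one, (isIdempotentElem_one_sub_mul h).eq, if_pos rfl,
      levelProj, mul_assoc]
  · rw [pow_mul_pow_of_ge h hij.le, ← Nat.succ_pred_eq_of_pos (Nat.sub_pos_of_lt hij),
      pow_succ, if_neg hij.ne']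
    simp only [mul_assoc, mul_one_sub_mul_self h, mul_zero, zero_mul]

theorem mul_levelProj_succ (i : ℕ) : x * levelProj x r (i + 1) = levelProj x r i * x := by
  simp only [levelProj, pow_succ' r, pow_succ x, ← mul_assoc, h, one_mul]

theorem mul_levelProj_zero : x * levelProj x r 0 = 0 := by
  rw [levelProj, pow_zero, pow_zero, one_mul, mul_one, mul_one_sub_mul_self h]

theorem pow_succ_mul_levelProj (i : ℕ) : x ^ (i + 1) * levelProj x r i = 0 := by
  induction i with
  | zero => rw [zero_add, pow_one, mul_levelProj_zero h]
  | succ i ih => rw [pow_succ, mul_assoc, mul_levelProj_succ h, ← mul_assoc, ih, zero_mul]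

omit h in
theorem sum_range_levelProj (n : ℕ) :
    ∑ i ∈ range n, levelProj x r i = 1 - r ^ n * x ^ n := by
  have : ∀ i, levelProj x r i = r ^ i * x ^ i - r ^ (i + 1) * x ^ (i + 1) := fun i => by
    simp only [levelProj, mul_sub, sub_mul, mul_one, pow_succ r, pow_succ' x, mul_assoc]
  simp only [this, sum_range_sub', pow_zero, mul_one]

omit h in
theorem levelSum_add_levelSum_not (S : ℕ → Prop) [DecidablePred S] (n : ℕ) :
    levelSum x r S n + levelSum x r (fun i => ¬ S i) n = ∑ i ∈ range n, levelProj x r i :=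
  sum_filter_add_sum_filter_not _ _ _

theorem isIdempotentElem_levelSum (S : ℕ → Prop) [DecidablePred S] (n : ℕ) :
    IsIdempotentElem (levelSum x r S n) := by
  simp only [IsIdempotentElem, levelSum, sum_mul_sum, levelProj_mul_levelProj h]
  exact sum_congr rfl fun i hi => by rw [sum_ite_eq, if_pos hi]

theorem pow_mul_levelSum (S : ℕ → Prop) [DecidablePred S] (n : ℕ) :
    x ^ n * levelSum x r S n = 0 := by
  rw [levelSum, mul_sum]
  refine sum_eq_zero fun i hi => ?_
  obtain ⟨d, rfl⟩ := Nat.exists_eq_add_of_lt (mem_range.mp (mem_filter.mp hi).1)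
  rw [show i + d + 1 = d + (i + 1) by omega, pow_add, mul_assoc, pow_succ_mul_levelProj h,
    mul_zero]

theorem levelSum_mul_mul_levelSum {S : ℕ → Prop} [DecidablePred S]
    (hS : ∀ i, S i → ¬ S (i + 1)) (n : ℕ) :
    levelSum x r S n * x * levelSum x r S n = 0 := by
  simp only [levelSum, sum_mul, mul_sum]
  refine sum_eq_zero fun i hi => sum_eq_zero fun j hj => ?_
  rw [mul_assoc]
  obtain _ | i := i
  · rw [mul_levelProj_zero h, mul_zero]
  · have hji : j ≠ i := fun hji => hS i (hji ▸ (mem_filter.mp hj).2) (mem_filter.mp hi).2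
    rw [mul_levelProj_succ h, ← mul_assoc, levelProj_mul_levelProj h, if_neg hji, zero_mul]

end RightInverse

section LocallyNilpotent

variable {R V : Type*} [Ring R] [AddCommGroup V] [Module R V] {x : Module.End R V}
  (r : Module.End R V) (S : ℕ → Prop) [DecidablePred S]

theorem levelProj_apply_of_pow_apply_eq_zero {v : V} {i : ℕ} (hv : (x ^ i) v = 0) :
    levelProj x r i v = 0 := by
  rw [levelProj, Module.End.mul_apply, hv, map_zero]

theorem levelSum_apply_eq_of_le {v : V} {n m : ℕ} (hv : (x ^ n) v = 0) (hnm : n ≤ m) :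
    levelSum x r S m v = levelSum x r S n v := by
  rw [levelSum, levelSum, LinearMap.sum_apply, LinearMap.sum_apply]
  refine (sum_subset (filter_subset_filter _ (range_subset_range.mpr hnm))
    fun i hi hi' => ?_).symm
  refine levelProj_apply_of_pow_apply_eq_zero r (Module.End.pow_map_zero_of_le ?_ hv)
  exact not_lt.mp fun hin => hi' (mem_filter.mpr ⟨mem_range.mpr hin, (mem_filter.mp hi).2⟩)

theorem levelSum_apply_eq {v : V} {n m : ℕ} (hn : (x ^ n) v = 0) (hm : (x ^ m) v = 0) :
    levelSum x r S n v = levelSum x r S m v := by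
  rw [← levelSum_apply_eq_of_le r S hn (le_max_left n m),
    levelSum_apply_eq_of_le r S hm (le_max_right n m)]

variable (hnil : ∀ v : V, ∃ n, (x ^ n) v = 0)

noncomputable def levelSetProj : Module.End R V where
  toFun v := levelSum x r S (hnil v).choose v
  map_add' v w := by
    obtain ⟨a, ha⟩ := hnil v
    obtain ⟨b, hb⟩ := hnil w
    have hv : (x ^ (a + b)) v = 0 := Module.End.pow_map_zero_of_le (Nat.le_add_right a b) ha
    have hw : (x ^ (a + b)) w = 0 := Module.End.pow_map_zero_of_le (Nat.le_add_left b a) hb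
    have hvw : (x ^ (a + b)) (v + w) = 0 := by rw [map_add, hv, hw, add_zero]
    rw [levelSum_apply_eq r S (hnil _).choose_spec hvw, map_add,
      levelSum_apply_eq r S (hnil v).choose_spec hv, levelSum_apply_eq r S (hnil w).choose_spec hw]
  map_smul' c v := by
    obtain ⟨a, ha⟩ := hnil v
    have hca : (x ^ a) (c • v) = 0 := by rw [map_smul, ha, smul_zero]
    rw [levelSum_apply_eq r S (hnil _).choose_spec hca, map_smul,
      levelSum_apply_eq r S (hnil v).choose_spec ha, RingHom.id_apply]

theorem levelSetProj_apply {v : V} {n : ℕ} (hv : (x ^ n) v = 0) :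
    levelSetProj r S hnil v = levelSum x r S n v :=
  levelSum_apply_eq r S (hnil v).choose_spec hv

theorem levelSetProj_add_levelSetProj_not :
    levelSetProj r S hnil + levelSetProj r (fun i => ¬ S i) hnil = 1 := by
  ext v
  obtain ⟨n, hn⟩ := hnil v
  rw [LinearMap.add_apply, levelSetProj_apply r S hnil hn, levelSetProj_apply r _ hnil hn,
    ← LinearMap.add_apply, levelSum_add_levelSum_not, sum_range_levelProj, LinearMap.sub_apply,
    Module.End.mul_apply, hn, map_zero, sub_zero]

variable (h : x * r = 1)
include h

theorem pow_apply_levelSum_apply (n : ℕ) (v : V) : (x ^ n) (levelSum x r S n v) = 0 := by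
  rw [← Module.End.mul_apply, pow_mul_levelSum h, LinearMap.zero_apply]

theorem isIdempotentElem_levelSetProj : IsIdempotentElem (levelSetProj r S hnil) := by
  ext v
  obtain ⟨n, hn⟩ := hnil v
  rw [Module.End.mul_apply, levelSetProj_apply r S hnil hn,
    levelSetProj_apply r S hnil (pow_apply_levelSum_apply r S h n v), ← Module.End.mul_apply,
    (isIdempotentElem_levelSum h S n).eq]

theorem levelSetProj_mul_mul_levelSetProj (hS : ∀ i, S i → ¬ S (i + 1)) :
    levelSetProj r S hnil * x * levelSetProj r S hnil = 0 := by
  ext v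
  obtain ⟨n, hn⟩ := hnil v
  have hxn : (x ^ n) (x (levelSum x r S n v)) = 0 := by
    rw [← Module.End.mul_apply, ← pow_succ, pow_succ', Module.End.mul_apply,
      pow_apply_levelSum_apply r S h, map_zero]
  rw [Module.End.mul_apply, Module.End.mul_apply, levelSetProj_apply r S hnil hn,
    levelSetProj_apply r S hnil hxn, ← Module.End.mul_apply, ← Module.End.mul_apply,
    levelSum_mul_mul_levelSum h hS, LinearMap.zero_apply]

omit S in
include hnil in
theorem exists_isIdempotentElem_add_eq_one_add_of_mul_eq_one :
    ∃ p q : Module.End R V, IsIdempotentElem p ∧ IsIdempotentElem q ∧ p + q = 1 + x := by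
  have hcompl : 1 - levelSetProj r Even hnil = levelSetProj r (fun i => ¬ Even i) hnil := by
    rw [← levelSetProj_add_levelSetProj_not r Even hnil, add_sub_cancel_left]
  refine IsIdempotentElem.exists_add_eq_one_add (isIdempotentElem_levelSetProj r Even hnil h)
    (levelSetProj_mul_mul_levelSetProj r Even hnil h fun i hi h' => Nat.even_add_one.mp h' hi) ?_
  rw [hcompl]
  exact levelSetProj_mul_mul_levelSetProj r _ hnil h fun i hi h' => h' (Nat.even_add_one.mpr hi)

end LocallyNilpotent

namespace Finsupp

variable {α M : Type*} [AddCommMonoid M]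

@[simps]
def filterLinearMap (R : Type*) [Semiring R] [Module R M] (p : α → Prop) [DecidablePred p] :
    (α →₀ M) →ₗ[R] α →₀ M where
  toFun := filter p
  map_add' _ _ := filter_add
  map_smul' _ _ := filter_smul

end Finsupp

section StrictUpperTriangular

open Finsupp

variable {K : Type*} [Ring K]

def IsStrictUpperTriangular (t : Module.End K (ℕ →₀ K)) : Prop :=
  ∀ i j, j ≤ i → t (single j 1) i = 0

theorem exists_mem_supported_Iio (v : ℕ →₀ K) : ∃ n, v ∈ supported K K (Set.Iio n) := by
  obtain ⟨n, hn⟩ := v.support.exists_nat_subset_range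
  exact ⟨n, by rw [mem_supported, ← coe_range]; exact_mod_cast hn⟩

namespace IsStrictUpperTriangular

variable {t : Module.End K (ℕ →₀ K)} (ht : IsStrictUpperTriangular t)
include ht

theorem apply_single_mem_supported (j : ℕ) : t (single j 1) ∈ supported K K (Set.Iio j) :=
  fun i hi => not_le.mp fun hji => mem_support_iff.mp hi (ht i j hji)

theorem apply_mem_supported {n : ℕ} {v : ℕ →₀ K}
    (hv : v ∈ supported K K (Set.Iio (n + 1))) :
    t v ∈ supported K K (Set.Iio n) := by
  refine (show supported K K (Set.Iio (n + 1)) ≤ (supported K K (Set.Iio n)).comap t from ?_) hv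
  rw [supported_eq_span_single, Submodule.span_le]
  rintro _ ⟨j, hj, rfl⟩
  exact supported_mono (Set.Iio_subset_Iio (Nat.lt_succ_iff.mp hj))
    (ht.apply_single_mem_supported j)

theorem pow_apply_eq_zero_of_mem_supported {n : ℕ} {v : ℕ →₀ K}
    (hv : v ∈ supported K K (Set.Iio n)) : (t ^ n) v = 0 := by
  induction n generalizing v with
  | zero => simpa [mem_supported] using hv
  | succ n ih => rw [pow_succ, Module.End.mul_apply, ih (ht.apply_mem_supported hv)]

theorem exists_pow_apply_eq_zero (v : ℕ →₀ K) : ∃ n, (t ^ n) v = 0 :=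
  (exists_mem_supported_Iio v).imp fun _ => ht.pow_apply_eq_zero_of_mem_supported

theorem surjective (hsup : ∀ i, t (single (i + 1) 1) i = 1) : Function.Surjective t := by
  have hsingle : ∀ n, single n (1 : K) ∈ LinearMap.range t := by
    intro n
    induction n using Nat.strong_induction_on with
    | _ n ih =>
      have hlow : supported K K (Set.Iio n) ≤ LinearMap.range t := by
        rw [supported_eq_span_single, Submodule.span_le]
        rintro _ ⟨j, hj, rfl⟩
        exact ih j hj
      have hdiff : t (single (n + 1) 1) - single n 1 ∈ supported K K (Set.Iio n) := by
        intro i hi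
        refine not_le.mp fun (hni : n ≤ i) => mem_support_iff.mp hi ?_
        rcases hni.eq_or_lt with rfl | hlt
        · rw [Finsupp.sub_apply, hsup, single_eq_same, sub_self]
        · rw [Finsupp.sub_apply, ht i (n + 1) hlt, single_eq_of_ne hlt.ne', sub_zero]
      rw [← sub_sub_cancel (t (single (n + 1) 1)) (single n 1)]
      exact sub_mem (LinearMap.mem_range_self t _) (hlow hdiff)
  rw [← LinearMap.range_eq_top, eq_top_iff, ← supported_univ, supported_eq_span_single,
    Submodule.span_le]
  rintro _ ⟨n, -, rfl⟩
  exact hsingle n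

end IsStrictUpperTriangular

end StrictUpperTriangular

section ParityBlocks

open Finsupp

variable {K : Type*} [Ring K]

theorem isIdempotentElem_filterLinearMap (p : ℕ → Prop) [DecidablePred p] :
    IsIdempotentElem (filterLinearMap K p : Module.End K (ℕ →₀ K)) := by
  ext j i
  by_cases hi : p i <;> simp [hi]

theorem one_sub_filterLinearMap (p : ℕ → Prop) [DecidablePred p] :
    1 - filterLinearMap K p =
      (filterLinearMap K (fun i => ¬ p i) : Module.End K (ℕ →₀ K)) := by
  ext j i
  by_cases hi : p i <;> simp [hi]

theorem filterLinearMap_mul_mul_filterLinearMap_single_apply (p : ℕ → Prop) [DecidablePred p]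
    (a : Module.End K (ℕ →₀ K)) (i j : ℕ) :
    (filterLinearMap K p * a * filterLinearMap K p : Module.End K (ℕ →₀ K)) (single j 1) i =
      if p i ∧ p j then a (single j 1) i else 0 := by
  by_cases hj : p j
  · by_cases hi : p i <;> simp [filter_single_of_pos _ hj, hi, hj]
  · simp [filter_single_of_neg _ hj, filter_zero, hj]

noncomputable def shiftDown : Module.End K (ℕ →₀ K) :=
  lcomapDomain (· + 1) (add_left_injective 1)

theorem shiftDown_apply (v : ℕ →₀ K) (i : ℕ) : shiftDown v i = v (i + 1) := by
  simp [shiftDown]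

theorem filterLinearMap_mul_shiftDown_mul_filterLinearMap {p : ℕ → Prop} [DecidablePred p]
    (hp : ∀ i, p i → ¬ p (i + 1)) :
    filterLinearMap K p * shiftDown * filterLinearMap K p = 0 := by
  ext j i
  by_cases hi : p i <;> simp [shiftDown_apply, hi, hp]

theorem IsStrictUpperTriangular.blockDiag_even_single_apply_eq_zero
    {N : Module.End K (ℕ →₀ K)} (hN : IsStrictUpperTriangular N) {i j : ℕ}
    (hji : j ≤ i + 1) :
    blockDiag (filterLinearMap K Even) N (single j 1) i = 0 := by
  rw [blockDiag, one_sub_filterLinearMap, LinearMap.add_apply, Finsupp.add_apply,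
    filterLinearMap_mul_mul_filterLinearMap_single_apply,
    filterLinearMap_mul_mul_filterLinearMap_single_apply]
  rcases hji.lt_or_eq with hji | rfl
  · simp [hN i j (Nat.lt_succ_iff.mp hji)]
  · by_cases hi : Even i <;> simp [hi, Nat.even_add_one]

theorem IsStrictUpperTriangular.shiftDown_add_blockDiag {N : Module.End K (ℕ →₀ K)}
    (hN : IsStrictUpperTriangular N) :
    IsStrictUpperTriangular (shiftDown + blockDiag (filterLinearMap K Even) N) :=
  fun i j hji => by
    rw [LinearMap.add_apply, Finsupp.add_apply, shiftDown_apply,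
      hN.blockDiag_even_single_apply_eq_zero (by omega), single_eq_of_ne (by omega), add_zero]

theorem IsStrictUpperTriangular.shiftDown_add_blockDiag_single_succ_apply
    {N : Module.End K (ℕ →₀ K)} (hN : IsStrictUpperTriangular N) (i : ℕ) :
    (shiftDown + blockDiag (filterLinearMap K Even) N : Module.End K (ℕ →₀ K))
      (single (i + 1) 1) i = 1 := by
  rw [LinearMap.add_apply, Finsupp.add_apply, shiftDown_apply,
    hN.blockDiag_even_single_apply_eq_zero le_rfl, single_eq_same, add_zero]

theorem IsStrictUpperTriangular.exists_four_isIdempotentElem_sum_eq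
    {u : Module.End K (ℕ →₀ K)} (hu : IsStrictUpperTriangular (u - 2)) :
    ∃ E : Fin 4 → Module.End K (ℕ →₀ K),
      (∀ i, IsIdempotentElem (E i)) ∧ ∑ i, E i = u := by
  have hx := hu.shiftDown_add_blockDiag
  obtain ⟨r, hr⟩ := LinearMap.exists_rightInverse_of_surjective _
    (LinearMap.range_eq_top.mpr (hx.surjective hu.shiftDown_add_blockDiag_single_succ_apply))
  refine (isIdempotentElem_filterLinearMap Even).exists_four_sum_eq
    (filterLinearMap_mul_shiftDown_mul_filterLinearMap fun i hi h => Nat.even_add_one.mp h hi)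
    ?_ (exists_isIdempotentElem_add_eq_one_add_of_mul_eq_one r hx.exists_pow_apply_eq_zero hr)
  rw [one_sub_filterLinearMap]
  exact filterLinearMap_mul_shiftDown_mul_filterLinearMap fun i hi h => h (Nat.even_add_one.mpr hi)

end ParityBlocks

theorem upper_triangular_end_sum_four_kpotent_general {F : Type*} [Field F]
    (k : ℕ) (hk : 2 ≤ k) (ω : F) (hω : ω ^ k = 1)
    (t : Module.End F (ℕ →₀ F))
    (hupper : ∀ i j : ℕ, j < i → t (Finsupp.single j 1) i = 0)
    (hdiag : ∀ n : ℕ, t (Finsupp.single n 1) n = 2 * ω) :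
    ∃ E : Fin 4 → Module.End F (ℕ →₀ F),
      (∀ i, E i ^ (k + 1) = E i) ∧ t = ∑ i, E i := by
  have hω0 : ω ≠ 0 := by
    rintro rfl
    simp [zero_pow (by omega : k ≠ 0)] at hω
  have hu : IsStrictUpperTriangular (ω⁻¹ • t - 2) := fun i j hji => by
    rcases hji.lt_or_eq with hlt | rfl
    · simp [hupper i j hlt, Finsupp.single_eq_of_ne hlt.ne']
    · simp [hdiag, mul_left_comm _ (2 : F), hω0]
  obtain ⟨E, hE, hsum⟩ := hu.exists_four_isIdempotentElem_sum_eq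
  refine ⟨fun i => ω • E i, fun i => ?_, ?_⟩
  · rw [smul_pow, (hE i).pow_succ_eq, pow_succ, hω, one_mul]
  · rw [← Finset.smul_sum, hsum, smul_inv_smul₀ hω0]

theorem upper_triangular_end_sum_four_kpotent {F : Type*} [Field F]
    (k : ℕ) (hk : 2 ≤ k) (ω : F) (hω : ω ^ k = 1) (hω1 : ω ≠ 1)
    (t : Module.End F (ℕ →₀ F))
    (hupper : ∀ i j : ℕ, j < i → t (Finsupp.single j 1) i = 0)
    (hdiag : ∀ n : ℕ, t (Finsupp.single n 1) n = 2 * ω) :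
    ∃ E : Fin 4 → Module.End F (ℕ →₀ F),
      (∀ i, E i ^ (k + 1) = E i) ∧ t = ∑ i, E i :=
  upper_triangular_end_sum_four_kpotent_general k hk ω hω t hupper hdiag
end

section
/- Let F be a field of characteristic different from 2, let k ≥ 2 be an integer, and let ω ∈ F satisfy ω^k = 1 and ω ≠ 1. If d is a diagonal F-linear endomorphism of ℕ →₀ F, then d is a sum of four (k+1)-potent F-linear endomorphisms of ℕ →₀ F. -/
open Finsupp

section aux

variable {F : Type*} [Field F]

/-- Endomorphism of `ℕ →₀ F` determined by its columns. -/
noncomputable def colMap (c : ℕ → (ℕ →₀ F)) : Module.End F (ℕ →₀ F) :=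
  Finsupp.lsum F fun j => LinearMap.toSpanSingleton F (ℕ →₀ F) (c j)

lemma colMap_single (c : ℕ → (ℕ →₀ F)) (j : ℕ) :
    colMap c (Finsupp.single j 1) = c j := by
  simp [colMap]

lemma end_ext {f g : Module.End F (ℕ →₀ F)}
    (h : ∀ j, f (Finsupp.single j 1) = g (Finsupp.single j 1)) : f = g := by
  apply Finsupp.lhom_ext
  intro a b
  have hb : (Finsupp.single a b : ℕ →₀ F) = b • Finsupp.single a 1 := by
    rw [Finsupp.smul_single, smul_eq_mul, mul_one]
  rw [hb, map_smul, map_smul, h]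

/-- Columns of a block operator: identity-like scalar `s` below `off`, and
2×2 blocks `[[x n, ε],[ε * y n, (1+ω) - x n]]` on positions `{2n+off, 2n+1+off}`. -/
noncomputable def potCol (ω : F) (off : ℕ) (s : F) (x : ℕ → F) (ε : F) : ℕ → (ℕ →₀ F) :=
  fun j =>
    if j < off then s • Finsupp.single j 1
    else
      if (j - off) % 2 = 0 then
        x ((j - off) / 2) • Finsupp.single (2 * ((j - off) / 2) + off) 1 +
          (ε * ((1 + ω) * x ((j - off) / 2) - ω - x ((j - off) / 2) ^ 2)) •
            Finsupp.single (2 * ((j - off) / 2) + 1 + off) 1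
      else
        ε • Finsupp.single (2 * ((j - off) / 2) + off) 1 +
          ((1 + ω) - x ((j - off) / 2)) • Finsupp.single (2 * ((j - off) / 2) + 1 + off) 1

lemma potCol_lt (ω : F) (off : ℕ) (s : F) (x : ℕ → F) (ε : F) {j : ℕ} (hj : j < off) :
    potCol ω off s x ε j = s • Finsupp.single j 1 := by
  simp [potCol, hj]

lemma potCol_even (ω : F) (off : ℕ) (s : F) (x : ℕ → F) (ε : F) (n : ℕ) :
    potCol ω off s x ε (2 * n + off) =
      x n • Finsupp.single (2 * n + off) 1 +
        (ε * ((1 + ω) * x n - ω - x n ^ 2)) • Finsupp.single (2 * n + 1 + off) 1 := by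
  have h1 : ¬ (2 * n + off < off) := by omega
  have h2 : (2 * n + off - off) = 2 * n := by omega
  simp [potCol, h1, h2, Nat.mul_mod_right, Nat.mul_div_cancel_left]

lemma potCol_odd (ω : F) (off : ℕ) (s : F) (x : ℕ → F) (ε : F) (n : ℕ) :
    potCol ω off s x ε (2 * n + 1 + off) =
      ε • Finsupp.single (2 * n + off) 1 +
        ((1 + ω) - x n) • Finsupp.single (2 * n + 1 + off) 1 := by
  have h1 : ¬ (2 * n + 1 + off < off) := by omega
  have h2 : (2 * n + 1 + off - off) = 2 * n + 1 := by omega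
  have h3 : (2 * n + 1) % 2 = 1 := by omega
  have h4 : (2 * n + 1) / 2 = n := by omega
  simp [potCol, h1, h2, h3, h4]

lemma cases3 (off j : ℕ) :
    j < off ∨ (∃ n, j = 2 * n + off) ∨ (∃ n, j = 2 * n + 1 + off) := by
  by_cases h : j < off
  · exact Or.inl h
  · rcases Nat.even_or_odd (j - off) with ⟨n, hn⟩ | ⟨n, hn⟩
    · exact Or.inr (Or.inl ⟨n, by omega⟩)
    · exact Or.inr (Or.inr ⟨n, by omega⟩)

/-- The block operator satisfies the quadratic relation `e² = (1+ω)e - ω`. -/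
lemma potCol_quad (ω : F) (off : ℕ) (s : F) (x : ℕ → F) (ε : F)
    (hε : ε * ε = 1) (hs : s * s = (1 + ω) * s - ω) :
    colMap (potCol ω off s x ε) * colMap (potCol ω off s x ε) =
      (1 + ω) • colMap (potCol ω off s x ε) - ω • 1 := by
  set e := colMap (potCol ω off s x ε) with he
  apply end_ext
  intro j
  have hrhs : ((1 + ω) • e - ω • (1 : Module.End F (ℕ →₀ F))) (Finsupp.single j 1)
      = (1 + ω) • e (Finsupp.single j 1) - ω • Finsupp.single j 1 := by
    simp
  rw [Module.End.mul_apply, hrhs]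
  rcases cases3 off j with hj | ⟨n, rfl⟩ | ⟨n, rfl⟩
  · rw [colMap_single, potCol_lt ω off s x ε hj, map_smul, colMap_single,
      potCol_lt ω off s x ε hj]
    match_scalars
    linear_combination hs
  · rw [colMap_single, potCol_even, map_add, map_smul, map_smul, colMap_single,
      colMap_single, potCol_even, potCol_odd]
    match_scalars
    · linear_combination ((1 + ω) * x n - ω - x n ^ 2) * hε
    · ring
  · rw [colMap_single, potCol_odd, map_add, map_smul, map_smul, colMap_single,
      colMap_single, potCol_even, potCol_odd]
    match_scalars
    · ring
    · linear_combination ((1 + ω) * x n - ω - x n ^ 2) * hε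

/-- Any element satisfying `e² = (1+ω)e - ω` with `ω^k = 1`, `ω ≠ 1` is `(k+1)`-potent. -/
lemma quad_pot {A : Type*} [Ring A] [Algebra F A] {k : ℕ} {ω : F}
    (hω : ω ^ k = 1) (hω1 : ω ≠ 1) {e : A} (h : e * e = (1 + ω) • e - ω • 1) :
    e ^ (k + 1) = e := by
  have hne : ω - 1 ≠ 0 := sub_ne_zero.2 hω1
  have key : ∀ n, e ^ (n + 1) =
      ((ω ^ (n + 1) - 1) / (ω - 1)) • e + (1 - (ω ^ (n + 1) - 1) / (ω - 1)) • (1 : A) := by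
    intro n
    induction n with
    | zero => simp [div_self hne]
    | succ n ih =>
      rw [pow_succ, ih, add_mul, smul_mul_assoc, smul_mul_assoc, one_mul, h]
      match_scalars
      · field_simp
        ring
      · field_simp
        ring
  have hk1 : ω ^ (k + 1) = ω := by rw [pow_succ, hω, one_mul]
  rw [key k, hk1, div_self hne]
  simp

/-- The recursively defined diagonal parameters. -/
noncomputable def aSeq (ω : F) (lam : ℕ → F) : ℕ → F
  | 0 => lam 0 - 1 - ω
  | n + 1 => lam (2 * n + 2) - 2 * (1 + ω) + (lam (2 * n + 1) - 2 * (1 + ω) + aSeq ω lam n)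

noncomputable def bSeq (ω : F) (lam : ℕ → F) (n : ℕ) : F :=
  lam (2 * n + 1) - 2 * (1 + ω) + aSeq ω lam n

lemma aSeq_succ (ω : F) (lam : ℕ → F) (n : ℕ) :
    aSeq ω lam (n + 1) = lam (2 * n + 2) - 2 * (1 + ω) + bSeq ω lam n := by
  rfl

end aux

theorem diagonal_end_sum_four_kpotent {F : Type*} [Field F] (hchar : (2 : F) ≠ 0)
    (k : ℕ) (hk : 2 ≤ k) (ω : F) (hω : ω ^ k = 1) (hω1 : ω ≠ 1)
    (d : Module.End F (ℕ →₀ F))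
    (hdiag : ∀ i j : ℕ, i ≠ j → d (Finsupp.single j 1) i = 0) :
    ∃ E : Fin 4 → Module.End F (ℕ →₀ F),
      (∀ i, E i ^ (k + 1) = E i) ∧ d = ∑ i, E i := by
  set lam : ℕ → F := fun j => d (Finsupp.single j 1) j with hlam
  have hd : ∀ j, d (Finsupp.single j 1) = lam j • Finsupp.single j 1 := by
    intro j
    ext i
    by_cases hij : i = j
    · subst hij
      simp [hlam]
    · rw [Finsupp.smul_apply, Finsupp.single_apply, if_neg (Ne.symm hij)]
      simp [hdiag i j hij]
  set x : ℕ → F := fun n => aSeq ω lam n / 2 with hx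
  set w : ℕ → F := fun n => bSeq ω lam n / 2 with hw
  set E1 : Module.End F (ℕ →₀ F) := colMap (potCol ω 0 1 x 1) with hE1
  set E2 : Module.End F (ℕ →₀ F) := colMap (potCol ω 0 1 x (-1)) with hE2
  set E3 : Module.End F (ℕ →₀ F) := colMap (potCol ω 1 1 w 1) with hE3
  set E4 : Module.End F (ℕ →₀ F) := colMap (potCol ω 1 ω w (-1)) with hE4
  have hq1 : E1 * E1 = (1 + ω) • E1 - ω • 1 :=
    potCol_quad ω 0 1 x 1 (by ring) (by ring)
  have hq2 : E2 * E2 = (1 + ω) • E2 - ω • 1 :=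
    potCol_quad ω 0 1 x (-1) (by ring) (by ring)
  have hq3 : E3 * E3 = (1 + ω) • E3 - ω • 1 :=
    potCol_quad ω 1 1 w 1 (by ring) (by ring)
  have hq4 : E4 * E4 = (1 + ω) • E4 - ω • 1 :=
    potCol_quad ω 1 ω w (-1) (by ring) (by ring)
  refine ⟨![E1, E2, E3, E4], ?_, ?_⟩
  · intro i
    fin_cases i
    · exact quad_pot (A := Module.End F (ℕ →₀ F)) hω hω1 hq1
    · exact quad_pot (A := Module.End F (ℕ →₀ F)) hω hω1 hq2
    · exact quad_pot (A := Module.End F (ℕ →₀ F)) hω hω1 hq3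
    · exact quad_pot (A := Module.End F (ℕ →₀ F)) hω hω1 hq4
  · rw [Fin.sum_univ_four]
    simp only [Matrix.cons_val_zero, Matrix.cons_val_one, Matrix.head_cons,
      Matrix.cons_val_two, Matrix.tail_cons, Matrix.cons_val_three]
    apply end_ext
    intro j
    rw [hd j]
    simp only [LinearMap.add_apply]
    rcases cases3 1 j with hj | ⟨n, rfl⟩ | ⟨n, rfl⟩
    · -- j = 0
      have hj0 : j = 0 := by omega
      subst hj0
      have h0 : (0 : ℕ) = 2 * 0 + 0 := rfl
      rw [hE1, hE2, hE3, hE4, colMap_single, colMap_single, colMap_single, colMap_single,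
        potCol_lt ω 1 1 w 1 (by omega), potCol_lt ω 1 ω w (-1) (by omega), h0,
        potCol_even, potCol_even]
      have hx0 : x 0 = (lam 0 - 1 - ω) / 2 := rfl
      rw [hx0]
      match_scalars <;>
        first
          | ring1
          | (field_simp [hchar]; ring1)
    · -- j = 2n+1 : odd for block pair 1, even (block n, offset 1) for pair 2
      have h1 : 2 * n + 1 = 2 * n + 1 + 0 := rfl
      have h2 : 2 * n + 1 = 2 * n + 1 := rfl
      rw [hE1, hE2, hE3, hE4, colMap_single, colMap_single, colMap_single, colMap_single]
      rw [show potCol ω 0 1 x 1 (2 * n + 1) = potCol ω 0 1 x 1 (2 * n + 1 + 0) from rfl,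
        show potCol ω 0 1 x (-1) (2 * n + 1) = potCol ω 0 1 x (-1) (2 * n + 1 + 0) from rfl,
        show potCol ω 1 1 w 1 (2 * n + 1) = potCol ω 1 1 w 1 (2 * n + 1) from rfl,
        show potCol ω 1 ω w (-1) (2 * n + 1) = potCol ω 1 ω w (-1) (2 * n + 1) from rfl]
      rw [potCol_odd ω 0 1 x 1 n, potCol_odd ω 0 1 x (-1) n,
        show (2 * n + 1) = 2 * n + 1 from rfl]
      rw [show potCol ω 1 1 w 1 (2 * n + 1) =
            w n • Finsupp.single (2 * n + 1) 1 +
              (1 * ((1 + ω) * w n - ω - w n ^ 2)) • Finsupp.single (2 * n + 1 + 1) 1 from by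
          simpa using potCol_even ω 1 1 w 1 n,
        show potCol ω 1 ω w (-1) (2 * n + 1) =
            w n • Finsupp.single (2 * n + 1) 1 +
              ((-1) * ((1 + ω) * w n - ω - w n ^ 2)) • Finsupp.single (2 * n + 1 + 1) 1 from by
          simpa using potCol_even ω 1 ω w (-1) n]
      have hxw : x n = aSeq ω lam n / 2 := rfl
      have hwn : w n = (lam (2 * n + 1) - 2 * (1 + ω) + aSeq ω lam n) / 2 := rfl
      rw [hxw, hwn]
      have e1 : (2 * n + 0 : ℕ) = 2 * n := rfl
      rw [e1]
      match_scalars <;>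
        first
          | ring1
          | (field_simp [hchar]; ring1)
    · -- j = 2n+2 : even (block n+1) for pair 1, odd (block n, offset 1) for pair 2
      have h1 : 2 * n + 1 + 1 = 2 * (n + 1) + 0 := by ring
      rw [hE1, hE2, hE3, hE4, colMap_single, colMap_single, colMap_single, colMap_single]
      rw [show potCol ω 0 1 x 1 (2 * n + 1 + 1) = potCol ω 0 1 x 1 (2 * (n + 1) + 0) from by
          rw [h1],
        show potCol ω 0 1 x (-1) (2 * n + 1 + 1) = potCol ω 0 1 x (-1) (2 * (n + 1) + 0) from by
          rw [h1]]
      rw [potCol_even ω 0 1 x 1 (n + 1), potCol_even ω 0 1 x (-1) (n + 1),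
        potCol_odd ω 1 1 w 1 n, potCol_odd ω 1 ω w (-1) n]
      have hx1 : x (n + 1) = (lam (2 * n + 2) - 2 * (1 + ω) + bSeq ω lam n) / 2 := by
        rw [hx]
        simp only
        rw [aSeq_succ]
      have hwn : w n = bSeq ω lam n / 2 := rfl
      rw [hx1, hwn]
      have e1 : (2 * (n + 1) + 0 : ℕ) = 2 * n + 1 + 1 := by ring
      have e2 : (2 * (n + 1) + 1 + 0 : ℕ) = 2 * n + 1 + 1 + 1 := by ring
      rw [e1, e2]
      have e3 : (2 * n + 1 : ℕ) = 2 * n + 1 := rfl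
      match_scalars <;>
        first
          | ring1
          | (field_simp [hchar]; ring1)
end

section
/- Let F be a field of characteristic different from 2, let k ≥ 2 be an integer, and suppose there exists ω ∈ F with ω^k = 1 and ω ≠ 1. Then every F-linear endomorphism of ℕ →₀ F is a sum of fourteen (k+1)-potent F-linear endomorphisms of ℕ →₀ F. -/
/-!
If `2` is invertible and `s` is an involution, `e = (1 + s) / 2` is idempotent, and every `h`
anticommuting with `s` satisfies `e h + h e = h`, so that `e + h e` and `(1 - e) + e h` are
idempotents with sum `1 + h`. It therefore suffices to write `A - 5` as a sum of five operators, each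
anticommuting with some involution.

On `ℕ →₀ F`, the sign involution `g = diag((-1)ⁿ)` anticommutes with the involution `w` swapping
`2n` and `2n + 1`. Splitting `A - 5` into its parts commuting and anticommuting with `g`, and then
with `w`, leaves two such pieces and a part `c` commuting with both; `c g` anticommutes with `w`,
and the rest, `c (1 - g)`, lives on the odd coordinates. Reindexing `ℕ` by `ℕ × ℕ` so that the
odd numbers form row `0`, an operator living on row `0` is `t ⊗ E₀₀`, and
`E₀₀ = diag((-1)ⁿ) + diag(0, 1, -1, 1, …)`; the first summand anticommutes with the row swap
`2n ↔ 2n + 1`, the second with the row swap `2n + 1 ↔ 2n + 2`, and both swaps commute with `t ⊗ 1`.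
So every operator is a sum of ten idempotents, and idempotents are `(k + 1)`-potent.
-/

open Finsupp

namespace IdempotentSum

section Semiring

variable {R : Type*} [Semiring R]

def IsSumOfIdempotents (n : ℕ) (x : R) : Prop :=
  ∃ p : Fin n → R, (∀ i, IsIdempotentElem (p i)) ∧ x = ∑ i, p i

theorem isSumOfIdempotents_zero (n : ℕ) : IsSumOfIdempotents n (0 : R) :=
  ⟨0, fun _ => IsIdempotentElem.zero, by simp⟩

theorem IsSumOfIdempotents.add {m n : ℕ} {x y : R} (hx : IsSumOfIdempotents m x)
    (hy : IsSumOfIdempotents n y) : IsSumOfIdempotents (m + n) (x + y) := by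
  obtain ⟨p, hp, rfl⟩ := hx
  obtain ⟨q, hq, rfl⟩ := hy
  exact ⟨Fin.append p q, Fin.addCases (by simpa using hp) (by simpa using hq),
    by simp [Fin.sum_univ_add]⟩

theorem IsSumOfIdempotents.map {S G : Type*} [Semiring S] [FunLike G R S] [RingHomClass G R S]
    (f : G) {n : ℕ} {x : R} (hx : IsSumOfIdempotents n x) : IsSumOfIdempotents n (f x) := by
  obtain ⟨p, hp, rfl⟩ := hx
  exact ⟨fun i => f (p i), fun i => (hp i).map f, map_sum f p _⟩

end Semiring

section Ring

variable {R : Type*} [Ring R]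

def AntiCommute (a b : R) : Prop := a * b = -(b * a)

theorem isSumOfIdempotents_two_one_add {e h : R} (he : IsIdempotentElem e)
    (heh : e * h + h * e = h) : IsSumOfIdempotents 2 (1 + h) := by
  have hehe : e * (h * e) = 0 := by
    have := congrArg (e * ·) heh
    simpa [mul_add, he.mul_self_mul] using this
  refine ⟨![e + h * e, 1 - e + e * h], fun i => ?_, ?_⟩
  · fin_cases i
    · show (e + h * e) * (e + h * e) = e + h * e
      simp only [add_mul, mul_add, mul_assoc, he.eq, hehe, mul_zero]
      abel
    · show (1 - e + e * h) * (1 - e + e * h) = 1 - e + e * h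
      have hehe' : e * (h * (e * h)) = 0 := by rw [← mul_assoc h, ← mul_assoc, hehe, zero_mul]
      simp only [add_mul, mul_add, sub_mul, mul_sub, one_mul, mul_one, mul_assoc, he.eq,
        he.mul_self_mul, hehe, hehe']
      abel
  · rw [Fin.sum_univ_two, Matrix.cons_val_zero, Matrix.cons_val_one, Matrix.cons_val_fin_one]
    conv_lhs => rw [← heh]
    abel

theorem AntiCommute.symm {a b : R} (h : AntiCommute a b) : AntiCommute b a := by
  rw [AntiCommute, h, neg_neg]

theorem antiCommute_mul_of_commute {w c g : R} (hwc : Commute w c) (hwg : AntiCommute w g) :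
    AntiCommute w (c * g) := by
  rw [AntiCommute, ← mul_assoc, hwc.eq, mul_assoc, hwg, mul_neg, mul_assoc]

end Ring

section Algebra

variable (F : Type*) [Field F] {R : Type*} [Ring R] [Algebra F R]

def oddPart (s a : R) : R := (2⁻¹ : F) • (a - s * a * s)

def evenPart (s a : R) : R := (2⁻¹ : F) • (a + s * a * s)

variable {F}

theorem oddPart_add_evenPart (h2 : (2 : F) ≠ 0) (s a : R) :
    oddPart F s a + evenPart F s a = a := by
  rw [oddPart, evenPart, ← smul_add, sub_add_add_cancel, ← two_smul F, smul_smul,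
    inv_mul_cancel₀ h2, one_smul]

variable {s : R}

theorem antiCommute_oddPart (hs : s * s = 1) (a : R) : AntiCommute s (oddPart F s a) := by
  simp only [AntiCommute, oddPart, mul_smul_comm, smul_mul_assoc, ← smul_neg, mul_sub, sub_mul,
    ← mul_assoc, hs, one_mul, neg_sub]
  rw [mul_assoc _ s s, hs, mul_one]

theorem commute_evenPart (hs : s * s = 1) (a : R) : Commute s (evenPart F s a) := by
  simp only [Commute, SemiconjBy, evenPart, mul_smul_comm, smul_mul_assoc, mul_add, add_mul,
    ← mul_assoc, hs, one_mul]
  rw [mul_assoc _ s s, hs, mul_one, add_comm]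

theorem commute_evenPart_of_antiCommute {g a : R} (hgs : AntiCommute g s) (hga : Commute g a) :
    Commute g (evenPart F s a) := by
  have hconj : g * (s * a * s) = s * a * s * g := by
    calc g * (s * a * s) = -(s * (g * a) * s) := by
          rw [← mul_assoc, ← mul_assoc, hgs, neg_mul, neg_mul, mul_assoc s g]
      _ = -(s * a * (g * s)) := by rw [hga.eq]; simp only [mul_assoc]
      _ = s * a * s * g := by rw [hgs, mul_neg, neg_neg]; simp only [mul_assoc]
  simp only [Commute, SemiconjBy, evenPart, mul_smul_comm, smul_mul_assoc, mul_add, add_mul,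
    hga.eq, hconj]

theorem isIdempotentElem_half_smul_one_add (h2 : (2 : F) ≠ 0) (hs : s * s = 1) :
    IsIdempotentElem ((2⁻¹ : F) • (1 + s)) := by
  have hsq : (1 + s) * (1 + s) = (2 : F) • (1 + s) := by
    simp only [two_smul, add_mul, mul_add, hs, one_mul, mul_one]; abel
  rw [IsIdempotentElem, smul_mul_smul_comm, hsq, smul_smul, mul_assoc, inv_mul_cancel₀ h2, mul_one]

theorem isSumOfIdempotents_two_one_add_of_antiCommute (h2 : (2 : F) ≠ 0) (hs : s * s = 1)
    {h : R} (hsh : AntiCommute s h) : IsSumOfIdempotents 2 (1 + h) := by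
  refine isSumOfIdempotents_two_one_add (isIdempotentElem_half_smul_one_add h2 hs) ?_
  rw [smul_mul_assoc, mul_smul_comm, ← smul_add, add_mul, mul_add, one_mul, mul_one, hsh,
    add_add_add_comm, neg_add_cancel, add_zero, ← two_smul F, smul_smul, inv_mul_cancel₀ h2,
    one_smul]

theorem exists_antiCommute_add_add_add_corner (h2 : (2 : F) ≠ 0) {g w : R} (hg : g * g = 1)
    (hw : w * w = 1) (hgw : AntiCommute g w) (a : R) :
    ∃ h₁ h₂ h₃ m : R, AntiCommute g h₁ ∧ AntiCommute w h₂ ∧ AntiCommute w h₃ ∧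
      (2⁻¹ : F) • (1 - g) * m = m ∧ m * ((2⁻¹ : F) • (1 - g)) = m ∧ a = h₁ + h₂ + h₃ + m := by
  set d := evenPart F g a
  set c := evenPart F w d
  have hgc : Commute g c := commute_evenPart_of_antiCommute hgw (commute_evenPart hg a)
  have hgm : g * (c - c * g) = -(c - c * g) := by
    rw [mul_sub, ← mul_assoc, hgc.eq, mul_assoc, hg, mul_one, neg_sub]
  have hmg : (c - c * g) * g = -(c - c * g) := by
    rw [sub_mul, mul_assoc, hg, mul_one, neg_sub]
  refine ⟨oddPart F g a, oddPart F w d, c * g, c - c * g, antiCommute_oddPart hg a,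
    antiCommute_oddPart hw d, antiCommute_mul_of_commute (commute_evenPart hw d) hgw.symm,
    ?_, ?_, ?_⟩
  · rw [smul_mul_assoc, sub_mul, one_mul, hgm, sub_neg_eq_add, ← two_smul F, smul_smul,
      inv_mul_cancel₀ h2, one_smul]
  · rw [mul_smul_comm, mul_sub, mul_one, hmg, sub_neg_eq_add, ← two_smul F, smul_smul,
      inv_mul_cancel₀ h2, one_smul]
  · calc a = oddPart F g a + (oddPart F w d + c) := by
          rw [oddPart_add_evenPart h2, oddPart_add_evenPart h2]
      _ = _ := by abel

end Algebra

section Diagonal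

variable {F : Type*} [CommRing F] {M : Type*} [AddCommGroup M] [Module F M] {ι : Type*}

noncomputable def diagEnd : (ι → F) →ₐ[F] Module.End F (ι →₀ M) where
  toFun d := lsum F fun i => d i • lsingle i
  map_one' := by ext; simp
  map_mul' d d' := by ext; simp [mul_smul]
  map_zero' := by ext; simp
  map_add' d d' := by ext; simp [add_smul]
  commutes' r := by ext; simp [Algebra.algebraMap_eq_smul_one]

theorem diagEnd_single (d : ι → F) (i : ι) (m : M) :
    diagEnd d (single i m) = d i • single i m := by
  simp [diagEnd]

theorem diagEnd_apply (d : ι → F) (v : ι →₀ M) (i : ι) : diagEnd d v i = d i • v i := by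
  induction v using Finsupp.induction_linear with
  | zero => simp
  | add v v' hv hv' => simp [hv, hv']
  | single j m =>
    rw [diagEnd_single]
    by_cases h : j = i
    · subst h; simp
    · simp [h]

theorem lmapDomain_mul_self {σ : ι → ι} (hσ : Function.Involutive σ) :
    lmapDomain M F σ * lmapDomain M F σ = 1 := by
  ext i m : 2
  simp [hσ i]

theorem antiCommute_lmapDomain_diagEnd {σ : ι → ι} {d : ι → F} (hd : ∀ i, d (σ i) = -d i) :
    AntiCommute (lmapDomain M F σ) (diagEnd d : Module.End F (ι →₀ M)) := by
  ext i m : 2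
  simp [diagEnd_single, hd]

theorem commute_mapRange_lmapDomain (t : M →ₗ[F] M) (σ : ι → ι) :
    Commute (mapRange.linearMap t : Module.End F (ι →₀ M)) (lmapDomain M F σ) := by
  ext i m : 2
  simp

theorem eq_mapRange_mul_diagEnd_single [DecidableEq ι] {i : ι} {θ : Module.End F (ι →₀ M)}
    (h₁ : diagEnd (Pi.single i 1) * θ = θ) (h₂ : θ * diagEnd (Pi.single i 1) = θ) :
    θ = mapRange.linearMap (lapply i ∘ₗ θ ∘ₗ lsingle i) * diagEnd (Pi.single i 1) := by
  ext j m : 2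
  by_cases hj : j = i
  · subst hj
    conv_lhs => rw [← h₁]
    ext k
    by_cases hk : k = j
    · subst hk; simp [diagEnd_apply]
    · simp [diagEnd_apply, hk]
  · conv_lhs => rw [← h₂]
    simp [diagEnd_single, hj]

end Diagonal

def swapPairs (n : ℕ) : ℕ := if n % 2 = 0 then n + 1 else n - 1

def swapPairsFromOne (n : ℕ) : ℕ := if n = 0 then 0 else swapPairs (n - 1) + 1

theorem swapPairs_involutive : Function.Involutive swapPairs := by
  intro n; unfold swapPairs; split_ifs <;> omega

theorem neg_one_pow_swapPairs {R : Type*} [Ring R] (n : ℕ) :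
    (-1 : R) ^ swapPairs n = -(-1) ^ n := by
  obtain ⟨k, rfl | rfl⟩ := Nat.even_or_odd' n
  · rw [show swapPairs (2 * k) = 2 * k + 1 by unfold swapPairs; split_ifs <;> omega, pow_succ,
      mul_neg_one]
  · rw [show swapPairs (2 * k + 1) = 2 * k by unfold swapPairs; split_ifs <;> omega, pow_succ,
      mul_neg_one, neg_neg]

theorem swapPairsFromOne_involutive : Function.Involutive swapPairsFromOne := by
  rintro (_ | n)
  · rfl
  · simp [swapPairsFromOne, swapPairs_involutive n]

theorem neg_one_pow_swapPairsFromOne {R : Type*} [Ring R] {n : ℕ} (hn : n ≠ 0) :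
    (-1 : R) ^ swapPairsFromOne n = -(-1) ^ n := by
  obtain ⟨n, rfl⟩ := Nat.exists_eq_succ_of_ne_zero hn
  rw [swapPairsFromOne, if_neg hn, Nat.succ_sub_one, pow_succ, neg_one_pow_swapPairs, pow_succ,
    neg_mul]

section Corner

variable {F : Type*} [Field F] {M : Type*} [AddCommGroup M] [Module F M]

theorem isSumOfIdempotents_four_two_add_of_corner (h2 : (2 : F) ≠ 0)
    {θ : Module.End F (ℕ →₀ M)} (h₁ : diagEnd (Pi.single 0 1) * θ = θ)
    (h₂ : θ * diagEnd (Pi.single 0 1) = θ) : IsSumOfIdempotents 4 (2 + θ) := by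
  set T := mapRange.linearMap (lapply 0 ∘ₗ θ ∘ₗ lsingle 0)
  set sign : ℕ → F := fun n => (-1) ^ n
  set rest : ℕ → F := Pi.single 0 1 - sign
  have hθ : θ = T * diagEnd sign + T * diagEnd rest := by
    rw [← mul_add, ← map_add, add_sub_cancel]
    exact eq_mapRange_mul_diagEnd_single h₁ h₂
  have hsign : ∀ n, sign (swapPairs n) = -sign n := neg_one_pow_swapPairs
  have hrest : ∀ n, rest (swapPairsFromOne n) = -rest n := by
    intro n
    rcases eq_or_ne n 0 with rfl | hn
    · simp [swapPairsFromOne, rest, sign]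
    · have : swapPairsFromOne n ≠ 0 := by simp [swapPairsFromOne, hn]
      simp [rest, sign, hn, this, neg_one_pow_swapPairsFromOne hn]
  rw [hθ, show (2 : Module.End F (ℕ →₀ M)) + (T * diagEnd sign + T * diagEnd rest) =
    (1 + T * diagEnd sign) + (1 + T * diagEnd rest) by rw [← one_add_one_eq_two]; abel]
  exact (isSumOfIdempotents_two_one_add_of_antiCommute h2
      (lmapDomain_mul_self swapPairs_involutive)
      (antiCommute_mul_of_commute (commute_mapRange_lmapDomain _ _).symm
        (antiCommute_lmapDomain_diagEnd hsign))).add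
    (isSumOfIdempotents_two_one_add_of_antiCommute h2
      (lmapDomain_mul_self swapPairsFromOne_involutive)
      (antiCommute_mul_of_commute (commute_mapRange_lmapDomain _ _).symm
        (antiCommute_lmapDomain_diagEnd hrest)))

end Corner

def pairSplit : ℕ × ℕ ≃ ℕ :=
  ((Equiv.prodCongr (Equiv.natEquivNatSumPUnit : ℕ ≃ ℕ ⊕ Unit) (Equiv.refl ℕ)).trans
      (Equiv.sumProdDistrib ℕ Unit ℕ)).trans
    ((Equiv.sumCongr Nat.pairEquiv (Equiv.punitProd ℕ)).trans Equiv.natSumNatEquivNat)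

theorem pairSplit_zero (j : ℕ) : pairSplit (0, j) = 2 * j + 1 := rfl

theorem pairSplit_succ (n j : ℕ) : pairSplit (n + 1, j) = 2 * Nat.pair n j := rfl

section Transport

variable (F : Type*) [CommRing F]

noncomputable def rowsEquiv : (ℕ →₀ F) ≃ₗ[F] (ℕ →₀ ℕ →₀ F) :=
  (Finsupp.domLCongr pairSplit.symm).trans (curryLinearEquiv F)

variable {F}

theorem rowsEquiv_single (n j : ℕ) (c : F) :
    rowsEquiv F (single (pairSplit (n, j)) c) = single n (single j c) := by
  ext a b
  simp [rowsEquiv, single_apply]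

theorem conjAlgEquiv_rowsEquiv_diagEnd {d : ℕ → F} {d' : ℕ → F}
    (hd : ∀ n j, d (pairSplit (n, j)) = d' n) :
    (rowsEquiv F).conjAlgEquiv F (diagEnd d) = diagEnd d' := by
  suffices h : (diagEnd d' : Module.End F (ℕ →₀ ℕ →₀ F)) ∘ₗ (rowsEquiv F).toLinearMap =
      (rowsEquiv F).toLinearMap ∘ₗ diagEnd d by
    refine LinearMap.ext fun v => ?_
    simpa using (LinearMap.congr_fun h ((rowsEquiv F).symm v)).symm
  refine lhom_ext fun a c => ?_
  obtain ⟨⟨n, j⟩, rfl⟩ := pairSplit.surjective a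
  simp only [LinearMap.comp_apply, LinearEquiv.coe_coe, rowsEquiv_single, diagEnd_single, hd,
    map_smul]

end Transport

theorem isSumOfIdempotents_ten {F : Type*} [Field F] (h2 : (2 : F) ≠ 0)
    (A : Module.End F (ℕ →₀ F)) : IsSumOfIdempotents 10 A := by
  set sign : ℕ → F := fun n => (-1) ^ n
  set g : Module.End F (ℕ →₀ F) := diagEnd sign
  set w : Module.End F (ℕ →₀ F) := lmapDomain F F swapPairs
  have hg : g * g = 1 := by
    rw [← map_mul, ← map_one diagEnd]
    congr 1; ext n; simp [sign, ← mul_pow]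
  have hw : w * w = 1 := lmapDomain_mul_self swapPairs_involutive
  have hgw : AntiCommute g w := (antiCommute_lmapDomain_diagEnd neg_one_pow_swapPairs).symm
  obtain ⟨h₁, h₂, h₃, m, hgh₁, hwh₂, hwh₃, hm₁, hm₂, hA⟩ :=
    exists_antiCommute_add_add_add_corner h2 hg hw hgw (A - 5)
  set Φ := (rowsEquiv F).conjAlgEquiv F
  have hP : Φ ((2⁻¹ : F) • (1 - g)) = diagEnd (Pi.single 0 1) := by
    rw [show (2⁻¹ : F) • (1 - g) = diagEnd ((2⁻¹ : F) • (1 - sign)) by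
      rw [map_smul, map_sub, map_one]]
    refine conjAlgEquiv_rowsEquiv_diagEnd fun n j => ?_
    rcases n with _ | n
    · simp [pairSplit_zero, sign, pow_succ, one_add_one_eq_two, h2]
    · simp [pairSplit_succ, sign]
  have hm : IsSumOfIdempotents 4 (2 + m) := by
    have h := (isSumOfIdempotents_four_two_add_of_corner h2 (θ := Φ m)
      (by rw [← hP, ← map_mul, hm₁]) (by rw [← hP, ← map_mul, hm₂])).map Φ.symm
    simpa [map_ofNat] using h
  rw [show A = (1 + h₁) + (1 + h₂) + (1 + h₃) + (2 + m) by
    rw [← sub_add_cancel A 5, hA, show (5 : Module.End F (ℕ →₀ F)) = 1 + 1 + 1 + 2 by norm_num]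
    abel]
  exact (((isSumOfIdempotents_two_one_add_of_antiCommute h2 hg hgh₁).add
    (isSumOfIdempotents_two_one_add_of_antiCommute h2 hw hwh₂)).add
    (isSumOfIdempotents_two_one_add_of_antiCommute h2 hw hwh₃)).add hm

end IdempotentSum

open IdempotentSum in
theorem end_sum_fourteen_kpotent_general {F : Type*} [Field F] (hchar : (2 : F) ≠ 0)
    (k : ℕ) (A : Module.End F (ℕ →₀ F)) :
    ∃ E : Fin 14 → Module.End F (ℕ →₀ F),
      (∀ i, E i ^ (k + 1) = E i) ∧ A = ∑ i, E i := by
  obtain ⟨E, hE, hA⟩ := (isSumOfIdempotents_ten hchar A).add (isSumOfIdempotents_zero 4)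
  exact ⟨E, fun i => (hE i).pow_succ_eq k, by rwa [add_zero] at hA⟩

theorem end_sum_fourteen_kpotent {F : Type*} [Field F] (hchar : (2 : F) ≠ 0)
    (k : ℕ) (hk : 2 ≤ k) (hω : ∃ ω : F, ω ^ k = 1 ∧ ω ≠ 1)
    (A : Module.End F (ℕ →₀ F)) :
    ∃ E : Fin 14 → Module.End F (ℕ →₀ F),
      (∀ i, E i ^ (k + 1) = E i) ∧ A = ∑ i, E i :=
  end_sum_fourteen_kpotent_general hchar k A
end
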